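/- arXiv:1011.5953 — 9 statements merged into one kernel-verified Lean document; each statement's English description precedes it below -/
import Mathlib

section
/- If H ≤ K ≤ G where G is a finitely generated group with word metric, and H has bounded packing in G, then H has bounded packing in K (with respect to the restriction of the metric to K). -/
open Pointwise

/-- `d` is the word metric on `G` associated to some finite generating set. -/
def IsWordMetric {G : Type*} [Group G] (d : G → G → ℝ) : Prop :=
  ∃ S : Finset G, Subgroup.closure (S : Set G) = ⊤ ∧
    ∀ g h : G, d g h = sInf {x : ℝ | ∃ l : List G,
      (∀ w ∈ l, w ∈ S ∨ w⁻¹ ∈ S) ∧ l.prod = g⁻¹ * h ∧ (l.length : ℝ) = x}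

/-- `H` has bounded packing in `G` with respect to the distance function `d`:
for every `r > 0` there is `N` such that any `N` distinct left cosets of `H`
contain a pair of cosets at distance at least `r`. -/
def BoundedPacking {G : Type*} [Group G] (d : G → G → ℝ) (H : Subgroup G) : Prop :=
  ∀ r : ℝ, 0 < r → ∃ N : ℕ, ∀ C : Finset (Set G),
    (∀ X ∈ C, ∃ g : G, X = g • (H : Set G)) → N ≤ C.card →
    ∃ X ∈ C, ∃ Y ∈ C, X ≠ Y ∧ ∀ x ∈ X, ∀ y ∈ Y, r ≤ d x y

/-!
A group homomorphism `φ : G' →* G` maps each left coset `g • φ⁻¹(H)` into the coset `φ g • H`,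
and distinct cosets of `φ⁻¹(H)` land in distinct cosets of `H`. So `N` distinct cosets of
`φ⁻¹(H)` give `N` distinct cosets of `H`, two of which are `r`-apart in `G`; the corresponding
cosets of `φ⁻¹(H)` are then `r`-apart for the pulled-back distance. For the inclusion `K → G`
this pulled-back distance is the restriction of `d` to `K`, and `φ⁻¹(H) = H ∩ K`.
-/

namespace Subgroup

variable {G G' : Type*} [Group G] [Group G'] (φ : G' →* G) (H : Subgroup G)

theorem image_coe_comap_mul : φ '' (H.comap φ : Set G') * H = H := by
  refine subset_antisymm ?_ (Set.subset_mul_right _ ⟨1, one_mem _, map_one φ⟩)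
  calc φ '' (H.comap φ : Set G') * H ⊆ (H : Set G) * H :=
        Set.mul_subset_mul_right (by rw [← coe_map]; exact map_comap_le φ H)
    _ = H := H.toSubmonoid.coe_mul_self_eq

theorem image_smul_comap_mul (g : G') :
    φ '' (g • (H.comap φ : Set G')) * H = φ g • (H : Set G) := by
  rw [Set.image_smul_distrib, smul_mul_assoc, image_coe_comap_mul]

theorem smul_comap_eq_of_smul_eq {g₁ g₂ : G'} (h : φ g₁ • (H : Set G) = φ g₂ • H) :
    g₁ • (H.comap φ : Set G') = g₂ • (H.comap φ : Set G') := by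
  rw [leftCoset_eq_iff] at h ⊢
  simpa using h

end Subgroup

theorem BoundedPacking.comap {G G' : Type*} [Group G] [Group G'] {d : G → G → ℝ}
    {H : Subgroup G} (φ : G' →* G) (hBP : BoundedPacking d H) :
    BoundedPacking (fun a b => d (φ a) (φ b)) (H.comap φ) := by
  classical
  intro r hr
  obtain ⟨N, hN⟩ := hBP r hr
  refine ⟨N, fun C hC hCN => ?_⟩
  let F : Set G' → Set G := fun X => φ '' X * H
  have hF : ∀ X ∈ C, ∃ g, X = g • (H.comap φ : Set G') ∧ F X = φ g • (H : Set G) := by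
    intro X hX
    obtain ⟨g, rfl⟩ := hC X hX
    exact ⟨g, rfl, H.image_smul_comap_mul φ g⟩
  have hFinj : Set.InjOn F C := by
    intro X hX Y hY hXY
    obtain ⟨g₁, rfl, hg₁⟩ := hF X hX
    obtain ⟨g₂, rfl, hg₂⟩ := hF Y hY
    exact H.smul_comap_eq_of_smul_eq φ (hg₁ ▸ hg₂ ▸ hXY)
  have hFcosets : ∀ Z ∈ C.image F, ∃ g : G, Z = g • (H : Set G) := by
    simp only [Finset.mem_image, forall_exists_index, and_imp, forall_apply_eq_imp_iff₂]
    intro X hX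
    obtain ⟨g, -, hg⟩ := hF X hX
    exact ⟨φ g, hg⟩
  obtain ⟨_, hFX, _, hFY, hXY, hfar⟩ :=
    hN (C.image F) hFcosets (by rwa [Finset.card_image_of_injOn hFinj])
  obtain ⟨X, hX, rfl⟩ := Finset.mem_image.mp hFX
  obtain ⟨Y, hY, rfl⟩ := Finset.mem_image.mp hFY
  have hmem : ∀ Z : Set G', ∀ z ∈ Z, φ z ∈ F Z :=
    fun Z z hz => Set.subset_mul_left _ H.one_mem (Set.mem_image_of_mem φ hz)
  exact ⟨X, hX, Y, hY, fun h => hXY (congrArg F h),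
    fun x hx y hy => hfar _ (hmem X x hx) _ (hmem Y y hy)⟩

theorem bounded_packing_of_le_general {G : Type*} [Group G] (d : G → G → ℝ)
    (H K : Subgroup G)
    (hBP : BoundedPacking d H) :
    BoundedPacking (fun a b : K => d a b) (H.subgroupOf K) :=
  hBP.comap K.subtype

theorem bounded_packing_of_le {G : Type*} [Group G] (d : G → G → ℝ)
    (hd : IsWordMetric d) (H K : Subgroup G) (hHK : H ≤ K)
    (hBP : BoundedPacking d H) :
    BoundedPacking (fun a b : K => d a b) (H.subgroupOf K) :=
  bounded_packing_of_le_general d H K hBP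
end

section
/- If H ≤ K ≤ G, H has bounded packing in K, and K has bounded packing in G, then H has bounded packing in G. -/
open Pointwise

/-!
A family of pairwise `r`-close cosets `xH` maps under `X ↦ XK` to a family of pairwise `r`-close
cosets of `K`, which has fewer than `N₂` members; by pigeonhole, more than `N₁` of the `H`-cosets
lie in a single coset `x₀K` as soon as there are more than `N₂ N₁` of them. Translating by `x₀⁻¹`
turns those into pairwise `r`-close cosets of `H ∩ K` in `K` (the word metric is left invariant),
of which there are fewer than `N₁`.
-/

section Packing

variable {G : Type*} [Group G]

def CloseSets {α : Type*} (d : α → α → ℝ) (r : ℝ) (X Y : Set α) : Prop :=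
  ∃ x ∈ X, ∃ y ∈ Y, d x y < r

def IsPackingBound (d : G → G → ℝ) (H : Subgroup G) (r : ℝ) (N : ℕ) : Prop :=
  ∀ C : Finset (Set G), (∀ X ∈ C, ∃ g : G, X = g • (H : Set G)) →
    (C : Set (Set G)).Pairwise (CloseSets d r) → C.card < N

theorem CloseSets.mono {α : Type*} {d : α → α → ℝ} {r : ℝ} {X X' Y Y' : Set α}
    (h : CloseSets d r X Y) (hX : X ⊆ X') (hY : Y ⊆ Y') : CloseSets d r X' Y' :=
  let ⟨x, hx, y, hy, hxy⟩ := h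
  ⟨x, hX hx, y, hY hy, hxy⟩

theorem boundedPacking_iff {d : G → G → ℝ} {H : Subgroup G} :
    BoundedPacking d H ↔ ∀ r : ℝ, 0 < r → ∃ N, IsPackingBound d H r N := by
  refine forall₂_congr fun r _ => exists_congr fun N => forall₂_congr fun C _ => ?_
  simp only [CloseSets, Set.Pairwise, Finset.mem_coe]
  constructor
  · intro h hclose
    by_contra! hN
    obtain ⟨X, hX, Y, hY, hXY, hfar⟩ := h hN
    obtain ⟨x, hx, y, hy, hxy⟩ := hclose hX hY hXY
    exact (hfar x hx y hy).not_gt hxy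
  · intro h hN
    by_contra! hclose
    exact (h fun X hX Y hY hXY => hclose X hX Y hY hXY).not_ge hN

theorem IsWordMetric.mul_left {d : G → G → ℝ} (hd : IsWordMetric d) (g x y : G) :
    d (g * x) (g * y) = d x y := by
  obtain ⟨S, -, hdist⟩ := hd
  rw [hdist, hdist, mul_inv_rev, mul_assoc, inv_mul_cancel_left]

theorem leftCoset_mul_of_le {H K : Subgroup G} (hHK : H ≤ K) (x : G) :
    x • (H : Set G) * (K : Set G) = x • (K : Set G) := by
  rw [smul_mul_assoc]
  congr 1
  refine (Set.mul_subset_iff.2 fun h hh k hk => K.mul_mem (hHK hh) hk).antisymm ?_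
  exact Set.subset_mul_right _ H.one_mem

def cosetTrace (K : Subgroup G) (g : G) (X : Set G) : Set K :=
  (fun k : K => g * k) ⁻¹' X

theorem cosetTrace_injOn (K : Subgroup G) (g : G) :
    {X : Set G | X ⊆ g • (K : Set G)}.InjOn (cosetTrace K g) := by
  have hrange : Set.range (fun k : K => g * k) = g • (K : Set G) := by
    rw [← Set.image_smul, ← Subtype.range_coe (s := (K : Set G)), ← Set.range_comp]; rfl
  intro X hX Y hY hXY
  calc X = (fun k : K => g * k) '' cosetTrace K g X :=
        (Set.image_preimage_eq_of_subset (hrange ▸ hX)).symm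
    _ = Y := by rw [hXY]; exact Set.image_preimage_eq_of_subset (hrange ▸ hY)

theorem cosetTrace_leftCoset {H K : Subgroup G} {g x : G}
    (hx : x • (H : Set G) ⊆ g • (K : Set G)) :
    ∃ k : K, cosetTrace K g (x • (H : Set G)) = k • ((H.subgroupOf K : Subgroup K) : Set K) := by
  have hk : g⁻¹ * x ∈ K := (mem_leftCoset_iff g).1 (hx ⟨1, H.one_mem, mul_one x⟩)
  refine ⟨⟨g⁻¹ * x, hk⟩, Set.ext fun k => ?_⟩
  simp only [cosetTrace, Set.mem_preimage, mem_leftCoset_iff, SetLike.mem_coe,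
    Subgroup.mem_subgroupOf, Subgroup.coe_mul, Subgroup.coe_inv]
  rw [mul_inv_rev, inv_inv, mul_assoc]

theorem CloseSets.cosetTrace {d : G → G → ℝ} (hinv : ∀ g x y : G, d (g * x) (g * y) = d x y)
    {K : Subgroup G} {g : G} {r : ℝ} {X Y : Set G} (hX : X ⊆ g • (K : Set G))
    (hY : Y ⊆ g • (K : Set G)) (h : CloseSets d r X Y) :
    CloseSets (fun a b : K => d a b) r (cosetTrace K g X) (cosetTrace K g Y) := by
  obtain ⟨x, hxX, y, hyY, hxy⟩ := h
  obtain ⟨a, ha, rfl⟩ := hX hxX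
  obtain ⟨b, hb, rfl⟩ := hY hyY
  exact ⟨⟨a, ha⟩, hxX, ⟨b, hb⟩, hyY, (hinv g a b).symm.trans_lt hxy⟩

theorem IsPackingBound.of_subgroupOf {d : G → G → ℝ}
    (hinv : ∀ g x y : G, d (g * x) (g * y) = d x y) {H K : Subgroup G} {r : ℝ} {N : ℕ}
    (hN : IsPackingBound (fun a b : K => d a b) (H.subgroupOf K) r N) {g : G}
    {C : Finset (Set G)} (hC : ∀ X ∈ C, ∃ x : G, X = x • (H : Set G))
    (hCK : ∀ X ∈ C, X ⊆ g • (K : Set G)) (hclose : (C : Set (Set G)).Pairwise (CloseSets d r)) :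
    C.card < N := by
  have hinj : Set.InjOn (cosetTrace K g) C := (cosetTrace_injOn K g).mono hCK
  rw [← Finset.card_image_of_injOn hinj]
  refine hN _ ?_ ?_
  · simp only [Finset.mem_image]
    rintro _ ⟨X, hX, rfl⟩
    obtain ⟨x, rfl⟩ := hC X hX
    exact cosetTrace_leftCoset (hCK _ hX)
  · rw [Finset.coe_image, hinj.pairwise_image]
    exact fun X hX Y hY hXY => (hclose hX hY hXY).cosetTrace hinv (hCK X hX) (hCK Y hY)

theorem IsPackingBound.trans {d : G → G → ℝ} (hinv : ∀ g x y : G, d (g * x) (g * y) = d x y)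
    {H K : Subgroup G} (hHK : H ≤ K) {r : ℝ} {N₁ N₂ : ℕ}
    (h₁ : IsPackingBound (fun a b : K => d a b) (H.subgroupOf K) r N₁)
    (h₂ : IsPackingBound d K r N₂) : IsPackingBound d H r (N₂ * N₁ + 1) := by
  intro C hC hclose
  have hsub : ∀ X : Set G, X ⊆ X * (K : Set G) := fun X => Set.subset_mul_left X K.one_mem
  have hcoset : ∀ X ∈ C, ∃ x : G, X * (K : Set G) = x • (K : Set G) :=
    fun X hX => (hC X hX).imp fun x hx => by rw [hx, leftCoset_mul_of_le hHK]
  set D := C.image (· * (K : Set G))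
  have hD : D.card < N₂ := by
    refine h₂ D ?_ ?_
    · simp only [D, Finset.mem_image]
      rintro _ ⟨X, hX, rfl⟩
      exact hcoset X hX
    · rw [Finset.coe_image]
      exact (hclose.mono' fun X Y h => h.mono (hsub X) (hsub Y)).image
  by_contra! hcard
  obtain ⟨E, hE, hfib⟩ :=
    Finset.exists_lt_card_fiber_of_mul_lt_card_of_maps_to (s := C) (t := D) (n := N₁)
    (fun X hX => Finset.mem_image_of_mem (· * (K : Set G)) hX)
    (by have := Nat.mul_le_mul_right N₁ hD.le; omega)
  obtain ⟨X₀, hX₀, rfl⟩ := Finset.mem_image.1 hE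
  obtain ⟨x₀, hx₀⟩ := hcoset X₀ hX₀
  refine lt_asymm hfib (h₁.of_subgroupOf hinv (g := x₀) ?_ ?_ ?_)
  · exact fun X hX => hC X (Finset.mem_filter.1 hX).1
  · intro X hX
    rw [← hx₀, ← (Finset.mem_filter.1 hX).2]
    exact hsub X
  · exact hclose.mono (Finset.coe_subset.2 (Finset.filter_subset _ C))

end Packing

theorem bounded_packing_trans {G : Type*} [Group G] (d : G → G → ℝ)
    (hd : IsWordMetric d) (H K : Subgroup G) (hHK : H ≤ K)
    (h1 : BoundedPacking (fun a b : K => d a b) (H.subgroupOf K))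
    (h2 : BoundedPacking d K) :
    BoundedPacking d H := by
  rw [boundedPacking_iff] at h1 h2 ⊢
  intro r hr
  obtain ⟨N₁, hN₁⟩ := h1 r hr
  obtain ⟨N₂, hN₂⟩ := h2 r hr
  exact ⟨N₂ * N₁ + 1, IsPackingBound.trans hd.mul_left hHK hN₁ hN₂⟩
end

section
/- If H ≤ K ≤ G and [K : H] < ∞, then H has bounded packing in G if and only if K has bounded packing in G. -/
open Pointwise

section Aux

variable {G : Type*} [Group G]

private lemma exists_word (S : Finset G) (hS : Subgroup.closure (S : Set G) = ⊤) (g : G) :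
    ∃ l : List G, (∀ w ∈ l, w ∈ S ∨ w⁻¹ ∈ S) ∧ l.prod = g := by
  have hg : g ∈ Subgroup.closure (S : Set G) := hS ▸ Subgroup.mem_top g
  induction hg using Subgroup.closure_induction with
  | mem x hx => exact ⟨[x], by simpa using Or.inl hx, by simp⟩
  | one => exact ⟨[], by simp, by simp⟩
  | mul x y hx hy ihx ihy =>
      obtain ⟨l1, h1, p1⟩ := ihx
      obtain ⟨l2, h2, p2⟩ := ihy
      refine ⟨l1 ++ l2, ?_, by simp [p1, p2]⟩
      intro w hw
      rcases List.mem_append.1 hw with h | h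
      exacts [h1 w h, h2 w h]
  | inv x hx ih =>
      obtain ⟨l, h1, p1⟩ := ih
      refine ⟨(l.map fun u => u⁻¹).reverse, ?_, ?_⟩
      · intro w hw
        simp only [List.mem_reverse, List.mem_map] at hw
        obtain ⟨u, hu, rfl⟩ := hw
        rcases h1 u hu with h | h
        · exact Or.inr (by simpa using h)
        · exact Or.inl h
      · rw [← List.prod_inv_reverse, p1]

/-- From a word metric extract a natural-number length function with the key properties. -/
private lemma exists_length (d : G → G → ℝ) (hd : IsWordMetric d) :
    ∃ ℓ : G → ℕ, (∀ g h : G, d g h = ℓ (g⁻¹ * h)) ∧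
      (∀ g h : G, ℓ (g * h) ≤ ℓ g + ℓ h) ∧ (∀ g : G, ℓ g⁻¹ = ℓ g) := by
  obtain ⟨S, hS, hdS⟩ := hd
  set P : List G → Prop := fun l => ∀ w ∈ l, w ∈ S ∨ w⁻¹ ∈ S with hP
  set A : G → Set ℕ := fun g => {n | ∃ l : List G, P l ∧ l.prod = g ∧ l.length = n} with hA
  have hAne : ∀ g, (A g).Nonempty := by
    intro g
    obtain ⟨l, h1, h2⟩ := exists_word S hS g
    exact ⟨l.length, l, h1, h2, rfl⟩
  set ℓ : G → ℕ := fun g => sInf (A g) with hℓ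
  have hmem : ∀ g, ℓ g ∈ A g := fun g => Nat.sInf_mem (hAne g)
  have hle : ∀ (g : G) (l : List G), P l → l.prod = g → ℓ g ≤ l.length := fun g l h1 h2 =>
    Nat.sInf_le ⟨l, h1, h2, rfl⟩
  refine ⟨ℓ, ?_, ?_, ?_⟩
  · intro g h
    rw [hdS]
    have hbdd : BddBelow {x : ℝ | ∃ l : List G, P l ∧ l.prod = g⁻¹ * h ∧ (l.length : ℝ) = x} := by
      refine ⟨0, ?_⟩
      rintro x ⟨l, -, -, rfl⟩
      positivity
    apply le_antisymm
    · apply csInf_le hbdd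
      obtain ⟨l, h1, h2, h3⟩ := hmem (g⁻¹ * h)
      exact ⟨l, h1, h2, by rw [h3]⟩
    · apply le_csInf
      · obtain ⟨l, h1, h2⟩ := exists_word S hS (g⁻¹ * h)
        exact ⟨(l.length : ℝ), l, h1, h2, rfl⟩
      · rintro x ⟨l, h1, h2, rfl⟩
        exact_mod_cast hle _ l h1 h2
  · intro g h
    obtain ⟨l1, h1, p1, q1⟩ := hmem g
    obtain ⟨l2, h2, p2, q2⟩ := hmem h
    have hcat : P (l1 ++ l2) := by
      intro w hw
      rcases List.mem_append.1 hw with hw | hw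
      exacts [h1 w hw, h2 w hw]
    calc ℓ (g * h) ≤ (l1 ++ l2).length := hle _ _ hcat (by simp [p1, p2])
      _ = ℓ g + ℓ h := by simp [q1, q2]
  · have key : ∀ g : G, ℓ g⁻¹ ≤ ℓ g := by
      intro g
      obtain ⟨l, h1, p1, q1⟩ := hmem g
      have hrev : P ((l.map fun u => u⁻¹).reverse) := by
        intro w hw
        simp only [List.mem_reverse, List.mem_map] at hw
        obtain ⟨u, hu, rfl⟩ := hw
        rcases h1 u hu with h | h
        · exact Or.inr (by simpa using h)
        · exact Or.inl h
      calc ℓ g⁻¹ ≤ ((l.map fun u => u⁻¹).reverse).length :=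
            hle _ _ hrev (by rw [← List.prod_inv_reverse, p1])
        _ = ℓ g := by simp [q1]
    exact fun g => le_antisymm (key g) (by simpa using key g⁻¹)

private lemma coset_mul (H K : Subgroup G) (hHK : H ≤ K) (g : G) :
    (g • (H : Set G)) * (K : Set G) = g • (K : Set G) := by
  ext x
  constructor
  · rintro ⟨y, hy, k, hk, rfl⟩
    obtain ⟨h, hh, rfl⟩ := hy
    refine ⟨h * k, K.mul_mem (hHK hh) hk, ?_⟩
    simp [smul_eq_mul, mul_assoc]
  · rintro ⟨k, hk, rfl⟩
    exact ⟨g • (1 : G), ⟨1, H.one_mem, rfl⟩, k, hk, by simp⟩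

open scoped Classical in
private noncomputable def repPt (H : Subgroup G) (X : Set G) : G :=
  if h : ∃ g : G, X = g • (H : Set G) then h.choose else 1

private lemma repPt_spec (H : Subgroup G) {X : Set G} (h : ∃ g : G, X = g • (H : Set G)) :
    X = repPt H X • (H : Set G) := by
  classical
  rw [repPt]
  rw [dif_pos h]
  exact h.choose_spec

/-- The easy direction: bounded packing passes down to subgroups of finite relative index. -/
private lemma packing_of_le (d : G → G → ℝ) (H K : Subgroup G) (hHK : H ≤ K)
    (hrel : H.relIndex K ≠ 0) (hK : BoundedPacking d K) : BoundedPacking d H := by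
  classical
  intro r hr
  obtain ⟨N, hN⟩ := hK r hr
  refine ⟨H.relIndex K * N + 1, fun C hC hcard => ?_⟩
  haveI : Finite (K ⧸ H.subgroupOf K) :=
    Nat.finite_of_card_ne_zero (by rw [← Subgroup.index_eq_card]; exact hrel)
  haveI : Fintype (K ⧸ H.subgroupOf K) := Fintype.ofFinite _
  set f : Set G → Set G := fun X => X * (K : Set G) with hf
  have himg : ∀ X ∈ C, ∃ g : G, f X = g • (K : Set G) ∧ X = g • (H : Set G) := by
    intro X hX
    obtain ⟨g, rfl⟩ := hC X hX
    exact ⟨g, coset_mul H K hHK g, rfl⟩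
  have hC' : ∀ Y ∈ C.image f, ∃ g : G, Y = g • (K : Set G) := by
    intro Y hY
    obtain ⟨X, hX, rfl⟩ := Finset.mem_image.1 hY
    obtain ⟨g, hg, -⟩ := himg X hX
    exact ⟨g, hg⟩
  have hcard2 : C.card ≤ H.relIndex K * (C.image f).card := by
    apply Finset.card_le_mul_card_image
    intro W hW
    obtain ⟨g₀, hg₀⟩ := hC' W hW
    set φ : Set G → K ⧸ H.subgroupOf K := fun X =>
      if h : g₀⁻¹ * repPt H X ∈ K then QuotientGroup.mk ⟨g₀⁻¹ * repPt H X, h⟩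
      else QuotientGroup.mk 1 with hφ
    have huniv : (Finset.univ : Finset (K ⧸ H.subgroupOf K)).card = H.relIndex K := by
      rw [Finset.card_univ, ← Nat.card_eq_fintype_card, ← Subgroup.index_eq_card]
      rfl
    rw [← huniv]
    apply Finset.card_le_card_of_injOn φ (fun _ _ => Finset.mem_univ _)
    intro X hX Y hY hXY
    simp only [Finset.coe_filter, Set.mem_setOf_eq] at hX hY
    have hXrep : X = repPt H X • (H : Set G) := repPt_spec H (hC X hX.1)
    have hYrep : Y = repPt H Y • (H : Set G) := repPt_spec H (hC Y hY.1)
    have hfX : repPt H X • (K : Set G) = g₀ • (K : Set G) := by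
      rw [← coset_mul H K hHK, ← hXrep]
      rw [hg₀] at hX
      exact hX.2
    have hfY : repPt H Y • (K : Set G) = g₀ • (K : Set G) := by
      rw [← coset_mul H K hHK, ← hYrep]
      rw [hg₀] at hY
      exact hY.2
    have hXK : g₀⁻¹ * repPt H X ∈ K := (leftCoset_eq_iff K).1 hfX.symm
    have hYK : g₀⁻¹ * repPt H Y ∈ K := (leftCoset_eq_iff K).1 hfY.symm
    rw [hφ] at hXY
    simp only [dif_pos hXK, dif_pos hYK] at hXY
    have hmem : ((⟨g₀⁻¹ * repPt H X, hXK⟩ : K)⁻¹ * ⟨g₀⁻¹ * repPt H Y, hYK⟩)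
        ∈ H.subgroupOf K := QuotientGroup.eq.1 hXY
    rw [Subgroup.mem_subgroupOf] at hmem
    have hH' : (repPt H X)⁻¹ * repPt H Y ∈ H := by
      have : ((⟨g₀⁻¹ * repPt H X, hXK⟩ : K)⁻¹ * ⟨g₀⁻¹ * repPt H Y, hYK⟩ : K)
          = ((g₀⁻¹ * repPt H X)⁻¹ * (g₀⁻¹ * repPt H Y) : G) := rfl
      rw [this] at hmem
      have heq : (g₀⁻¹ * repPt H X)⁻¹ * (g₀⁻¹ * repPt H Y)
          = (repPt H X)⁻¹ * repPt H Y := by group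
      rwa [heq] at hmem
    rw [hXrep, hYrep]
    exact (leftCoset_eq_iff H).2 hH'
  have hNimg : N ≤ (C.image f).card := by
    have h1 : H.relIndex K * N < H.relIndex K * (C.image f).card :=
      lt_of_lt_of_le (Nat.lt_succ_self _) (le_trans hcard hcard2)
    exact le_of_lt (Nat.lt_of_mul_lt_mul_left h1)
  obtain ⟨A, hA, B, hB, hAB, hfar⟩ := hN (C.image f) hC' hNimg
  obtain ⟨X, hX, hfX⟩ := Finset.mem_image.1 hA
  obtain ⟨Y, hY, hfY⟩ := Finset.mem_image.1 hB
  have hsub : ∀ Z ∈ C, Z ⊆ f Z := by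
    intro Z hZ
    obtain ⟨g, hg, hg'⟩ := himg Z hZ
    rw [hg, hg']
    exact Set.smul_set_mono hHK
  refine ⟨X, hX, Y, hY, ?_, ?_⟩
  · intro h
    exact hAB (by rw [← hfX, ← hfY, h])
  · intro x hx y hy
    exact hfar x (hfX ▸ hsub X hX hx) y (hfY ▸ hsub Y hY hy)

/-- The hard direction, for a subgroup normalized by `K`: bounded packing passes up
to finite-index overgroups. -/
private lemma packing_of_normal (d : G → G → ℝ) (ℓ : G → ℕ)
    (hd_eq : ∀ g h : G, d g h = ℓ (g⁻¹ * h))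
    (hℓ_mul : ∀ g h : G, ℓ (g * h) ≤ ℓ g + ℓ h) (hℓ_inv : ∀ g : G, ℓ g⁻¹ = ℓ g)
    (H K : Subgroup G) (hHK : H ≤ K) (hrel : H.relIndex K ≠ 0)
    (hnorm : ∀ k ∈ K, ∀ h ∈ H, k * h * k⁻¹ ∈ H)
    (hH : BoundedPacking d H) : BoundedPacking d K := by
  classical
  haveI : Finite (K ⧸ H.subgroupOf K) :=
    Nat.finite_of_card_ne_zero (by rw [← Subgroup.index_eq_card]; exact hrel)
  haveI : Fintype (K ⧸ H.subgroupOf K) := Fintype.ofFinite _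
  set T : Finset G :=
    Finset.image (fun q : K ⧸ H.subgroupOf K => ((Quotient.out q : K) : G)) Finset.univ with hT
  have hcover : ∀ k : G, k ∈ K → ∃ t ∈ T, t⁻¹ * k ∈ H ∧ t ∈ K := by
    intro k hk
    set q : K ⧸ H.subgroupOf K := QuotientGroup.mk ⟨k, hk⟩ with hq
    refine ⟨((Quotient.out q : K) : G), Finset.mem_image_of_mem _ (Finset.mem_univ q),
      ?_, (Quotient.out q : K).2⟩
    have hout : QuotientGroup.mk (Quotient.out q) = QuotientGroup.mk (⟨k, hk⟩ : K) :=
      QuotientGroup.out_eq' q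
    have h2 : (Quotient.out q)⁻¹ * ⟨k, hk⟩ ∈ H.subgroupOf K := QuotientGroup.eq.1 hout
    rw [Subgroup.mem_subgroupOf] at h2
    exact h2
  set D : ℕ := T.sup ℓ with hD
  have hDle : ∀ t ∈ T, ℓ t ≤ D := fun t ht => Finset.le_sup ht
  have key : ∀ a b c : G, ℓ b ≤ ℓ a + ℓ (a⁻¹ * b * c⁻¹) + ℓ c := by
    intro a b c
    have h1 : ℓ b = ℓ (a * (a⁻¹ * b * c⁻¹) * c) := by
      rw [show a * (a⁻¹ * b * c⁻¹) * c = b by group]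
    rw [h1]
    exact le_trans (hℓ_mul _ _) (add_le_add_left (hℓ_mul a _) _)
  intro r hr
  obtain ⟨N, hN⟩ := hH (r + 2 * D) (by positivity)
  refine ⟨N, fun C hC hcard => ?_⟩
  set f : Set G → Set G := fun X => repPt K X • (H : Set G) with hf
  have hrep : ∀ X ∈ C, X = repPt K X • (K : Set G) := fun X hX => repPt_spec K (hC X hX)
  have hinj : Set.InjOn f C := by
    intro X hX Y hY hXY
    simp only [Finset.mem_coe] at hX hY
    have h1 : (repPt K X)⁻¹ * repPt K Y ∈ H := (leftCoset_eq_iff H).1 hXY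
    rw [hrep X hX, hrep Y hY]
    exact (leftCoset_eq_iff K).2 (hHK h1)
  have hcard' : N ≤ (C.image f).card := by
    rw [Finset.card_image_of_injOn hinj]
    exact hcard
  have hC'' : ∀ Z ∈ C.image f, ∃ g : G, Z = g • (H : Set G) := by
    intro Z hZ
    obtain ⟨X, hX, rfl⟩ := Finset.mem_image.1 hZ
    exact ⟨repPt K X, rfl⟩
  obtain ⟨A, hA, B, hB, hAB, hfar⟩ := hN (C.image f) hC'' hcard'
  obtain ⟨X, hX, hfX⟩ := Finset.mem_image.1 hA
  obtain ⟨Y, hY, hfY⟩ := Finset.mem_image.1 hB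
  refine ⟨X, hX, Y, hY, ?_, ?_⟩
  · intro h
    exact hAB (by rw [← hfX, ← hfY, h])
  · intro x hx y hy
    set gX := repPt K X with hgX
    set gY := repPt K Y with hgY
    rw [hrep X hX] at hx
    obtain ⟨k, hk, rfl⟩ := hx
    rw [hrep Y hY] at hy
    obtain ⟨k', hk', rfl⟩ := hy
    obtain ⟨t, htT, hth, htK⟩ := hcover k hk
    obtain ⟨t', ht'T, ht'h, ht'K⟩ := hcover k' hk'
    set h₁ : G := t * (t⁻¹ * k)⁻¹ * t⁻¹ with hh₁
    set h₂ : G := t' * (t'⁻¹ * k') * t'⁻¹ with hh₂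
    have h₁H : h₁ ∈ H := hnorm t htK _ (H.inv_mem hth)
    have h₂H : h₂ ∈ H := hnorm t' ht'K _ ht'h
    set m : G := h₁ * (gX⁻¹ * gY) * h₂ with hm
    have haA : gX * h₁⁻¹ ∈ A := by
      rw [← hfX, hf]
      exact ⟨h₁⁻¹, H.inv_mem h₁H, rfl⟩
    have hbB : gY * h₂ ∈ B := by
      rw [← hfY, hf]
      exact ⟨h₂, h₂H, rfl⟩
    have e1 : r + 2 * D ≤ (ℓ m : ℝ) := by
      have := hfar (gX * h₁⁻¹) haA (gY * h₂) hbB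
      rwa [hd_eq, show (gX * h₁⁻¹)⁻¹ * (gY * h₂) = m by rw [hm]; group] at this
    have e2 : ℓ m ≤ ℓ t + ℓ (k⁻¹ * gX⁻¹ * (gY * k')) + ℓ t' := by
      have h3 := key t m t'⁻¹
      rw [hℓ_inv t'] at h3
      have h4 : t⁻¹ * m * t'⁻¹⁻¹ = k⁻¹ * gX⁻¹ * (gY * k') := by
        rw [hm, hh₁, hh₂]; group
      rwa [h4] at h3
    have e3 : (ℓ m : ℝ) ≤ D + ℓ (k⁻¹ * gX⁻¹ * (gY * k')) + D := by
      have := le_trans e2 (add_le_add (add_le_add_left (hDle t htT) _) (hDle t' ht'T))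
      exact_mod_cast this
    rw [hd_eq]
    have h5 : (gX • k)⁻¹ * gY • k' = k⁻¹ * gX⁻¹ * (gY * k') := by
      simp only [smul_eq_mul]; group
    rw [h5]
    linarith

end Aux

theorem bounded_packing_iff_of_finite_relindex {G : Type*} [Group G] (d : G → G → ℝ)
    (hd : IsWordMetric d) (H K : Subgroup G) (hHK : H ≤ K)
    (hrel : H.relIndex K ≠ 0) :
    BoundedPacking d H ↔ BoundedPacking d K := by
  obtain ⟨ℓ, hd_eq, hℓ_mul, hℓ_inv⟩ := exists_length d hd
  constructor
  · intro hH
    set H' : Subgroup K := (H.subgroupOf K).normalCore with hH'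
    set H₀ : Subgroup G := H'.map K.subtype with hH₀
    have h0H : H₀ ≤ H := by
      have h1 : H' ≤ H.subgroupOf K := Subgroup.normalCore_le _
      calc H₀ ≤ (H.subgroupOf K).map K.subtype := Subgroup.map_mono h1
        _ = H ⊓ K := Subgroup.subgroupOf_map_subtype H K
        _ ≤ H := inf_le_left
    have h0K : H₀ ≤ K := Subgroup.map_subtype_le _
    have hsub : H₀.subgroupOf K = H' :=
      Subgroup.comap_map_eq_self_of_injective K.subtype_injective _
    have hrel0K : H₀.relIndex K ≠ 0 := by
      haveI : (H.subgroupOf K).FiniteIndex := ⟨hrel⟩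
      show (H₀.subgroupOf K).index ≠ 0
      rw [hsub]
      exact Subgroup.FiniteIndex.index_ne_zero
    have hrel0H : H₀.relIndex H ≠ 0 := by
      intro h0
      apply hrel0K
      rw [← Subgroup.relIndex_mul_relIndex H₀ H K h0H hHK, h0, zero_mul]
    have hnorm : ∀ k ∈ K, ∀ h ∈ H₀, k * h * k⁻¹ ∈ H₀ := by
      intro k hk h hh
      obtain ⟨h', hh', rfl⟩ := hh
      have hconj : (⟨k, hk⟩ : K) * h' * (⟨k, hk⟩ : K)⁻¹ ∈ H' :=
        (Subgroup.normalCore_normal _).conj_mem h' hh' ⟨k, hk⟩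
      exact ⟨_, hconj, rfl⟩
    exact packing_of_normal d ℓ hd_eq hℓ_mul hℓ_inv H₀ K h0K hrel0K hnorm
      (packing_of_le d H₀ H h0H hrel0H hH)
  · exact packing_of_le d H K hHK hrel
end

section
/- Every normal subgroup of a finitely generated group has bounded packing. -/
/-!
Fix a coset `g₀N` of a family of pairwise `r`-close cosets. Any other member is `yN` with
`x ∈ g₀N` and `x⁻¹y` of word length `< r`; since `N` is normal, `yN = g₀N · (x⁻¹y)N` is
determined by the class of `x⁻¹y` in `G ⧸ N`. The word ball of radius `r` is finite, so the
family has at most one more member than that ball.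
-/

open Pointwise

section WordBall

variable {G : Type*} [Group G]

def wordBall (S : Set G) (n : ℕ) : Set G :=
  List.prod '' {l : List G | (∀ w ∈ l, w ∈ S ∪ S⁻¹) ∧ l.length ≤ n}

theorem Set.Finite.wordBall {S : Set G} (hS : S.Finite) (n : ℕ) : (wordBall S n).Finite := by
  have : Finite ↥(S ∪ S⁻¹) := (hS.union hS.inv).to_subtype
  refine (((List.finite_length_le ↥(S ∪ S⁻¹) n).image (List.map Subtype.val)).image
    List.prod).subset ?_
  rintro _ ⟨l, ⟨hl, hlen⟩, rfl⟩
  lift l to List ↥(S ∪ S⁻¹) using hl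
  exact ⟨_, ⟨l, by simpa using hlen, rfl⟩, rfl⟩

theorem exists_word_of_closure_eq_top {S : Set G} (hS : Subgroup.closure S = ⊤) (g : G) :
    ∃ l : List G, (∀ w ∈ l, w ∈ S ∪ S⁻¹) ∧ l.prod = g := by
  refine Submonoid.exists_list_of_mem_closure ?_
  rw [← Subgroup.closure_toSubmonoid, Subgroup.mem_toSubmonoid, hS]
  exact Subgroup.mem_top g

theorem IsWordMetric.exists_finset_forall_dist_lt {d : G → G → ℝ} (hd : IsWordMetric d)
    (r : ℝ) : ∃ F : Finset G, ∀ x y, d x y < r → x⁻¹ * y ∈ F := by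
  obtain ⟨S, hS, hdS⟩ := hd
  refine ⟨((S : Set G).toFinite.wordBall ⌈r⌉₊).toFinset, fun x y hxy => ?_⟩
  rw [Set.Finite.mem_toFinset]
  rw [hdS] at hxy
  obtain ⟨w, hw, hwprod⟩ := exists_word_of_closure_eq_top hS (x⁻¹ * y)
  obtain ⟨_, ⟨l, hl, hprod, rfl⟩, hlt⟩ :=
    exists_lt_of_csInf_lt (by exact ⟨_, w, hw, hwprod, rfl⟩) hxy
  exact ⟨l, ⟨hl, by exact_mod_cast (hlt.trans_le (Nat.le_ceil r)).le⟩, hprod⟩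

end WordBall

section Packing

variable {G : Type*} [Group G] {N : Subgroup G}

theorem QuotientGroup.mk_eq_of_mem_leftCoset {g x : G} (hx : x ∈ g • (N : Set G)) :
    (x : G ⧸ N) = g :=
  (QuotientGroup.eq.2 ((mem_leftCoset_iff g).1 hx)).symm

theorem eq_setOf_mk_eq_of_mem {X : Set G} {g y : G} (hX : X = g • (N : Set G)) (hy : y ∈ X) :
    X = {x : G | (x : G ⧸ N) = y} := by
  subst hX
  rw [← QuotientGroup.eq_class_eq_leftCoset, QuotientGroup.mk_eq_of_mem_leftCoset hy]

theorem card_le_of_pairwise_dist_lt [N.Normal] {d : G → G → ℝ} {r : ℝ} {F : Finset (G ⧸ N)}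
    (hF : ∀ x y, d x y < r → ((x⁻¹ * y : G) : G ⧸ N) ∈ F) {C : Finset (Set G)}
    (hC : ∀ X ∈ C, ∃ g : G, X = g • (N : Set G))
    (hclose : ∀ X ∈ C, ∀ Y ∈ C, X ≠ Y → ∃ x ∈ X, ∃ y ∈ Y, d x y < r) :
    C.card ≤ F.card + 1 := by
  classical
  obtain rfl | ⟨X₀, hX₀⟩ := C.eq_empty_or_nonempty
  · simp
  obtain ⟨g₀, hg₀⟩ := hC X₀ hX₀
  let fiber : G ⧸ N → Set G := fun q => {x : G | (x : G ⧸ N) = g₀ * q}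
  have hsub : C ⊆ insert X₀ (F.image fiber) := by
    intro Y hY
    rcases eq_or_ne Y X₀ with rfl | hne
    · exact Finset.mem_insert_self _ _
    obtain ⟨x, hx, y, hy, hxy⟩ := hclose X₀ hX₀ Y hY hne.symm
    obtain ⟨g, hg⟩ := hC Y hY
    have hx' : (x : G ⧸ N) = g₀ := QuotientGroup.mk_eq_of_mem_leftCoset (hg₀ ▸ hx)
    refine Finset.mem_insert_of_mem (Finset.mem_image.2 ⟨_, hF x y hxy, ?_⟩)
    rw [eq_setOf_mk_eq_of_mem hg hy, QuotientGroup.mk_mul, QuotientGroup.mk_inv, hx']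
    simp only [fiber, mul_inv_cancel_left]
  calc C.card ≤ (insert X₀ (F.image fiber)).card := Finset.card_le_card hsub
    _ ≤ (F.image fiber).card + 1 := Finset.card_insert_le _ _
    _ ≤ F.card + 1 := by gcongr; exact Finset.card_image_le

theorem boundedPacking_of_forall_exists_finset [N.Normal] {d : G → G → ℝ}
    (h : ∀ r : ℝ, ∃ F : Finset (G ⧸ N), ∀ x y, d x y < r → ((x⁻¹ * y : G) : G ⧸ N) ∈ F) :
    BoundedPacking d N := by
  intro r _
  obtain ⟨F, hF⟩ := h r
  refine ⟨F.card + 2, fun C hC hcard => ?_⟩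
  by_contra! hclose
  have := card_le_of_pairwise_dist_lt hF hC hclose
  omega

end Packing

theorem bounded_packing_of_normal {G : Type*} [Group G] (d : G → G → ℝ)
    (hd : IsWordMetric d) (N : Subgroup G) [N.Normal] :
    BoundedPacking d N := by
  classical
  refine boundedPacking_of_forall_exists_finset fun r => ?_
  obtain ⟨F, hF⟩ := hd.exists_finset_forall_dist_lt r
  exact ⟨F.image (↑), fun x y hxy => Finset.mem_image_of_mem _ (hF x y hxy)⟩
end

section
/- For every linear map φ on ℝⁿ and every δ > 0, there exists a norm on ℝⁿ (equivalent to the Euclidean norm) such that the operator norm of φ with respect to that norm is less than ρ(φ) + δ. -/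
/-! By Gelfand's formula applied to the complexified matrix `Aℂ`, some power satisfies
`‖Aℂ ^ k‖ ≤ r ^ k` for a fixed `ρ < r < ρ + δ`, and the real operator norm of `A ^ k` is at most
that of its complexification. The norm `N v = ∑ i < k, r⁻¹ ^ i * ‖A ^ i v‖` then contracts:
shifting the sum by one index gives `r⁻¹ * N (A v) + ‖v‖ = N v + r⁻¹ ^ k * ‖A ^ k v‖`, and the
last term is at most `‖v‖`. -/

open Finset NNReal Filter
open scoped Matrix

namespace ContinuousLinearMap

variable {𝕜 E : Type*} [NontriviallyNormedField 𝕜] [SeminormedAddCommGroup E] [NormedSpace 𝕜 E]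

noncomputable def orbitSeminorm (f : E →L[𝕜] E) (c : ℝ≥0) (k : ℕ) : Seminorm 𝕜 E :=
  ∑ i ∈ range k, c ^ i • (normSeminorm 𝕜 E).comp (f ^ i).toLinearMap

variable (f : E →L[𝕜] E) (c : ℝ≥0) (k : ℕ)

theorem orbitSeminorm_apply (v : E) :
    f.orbitSeminorm c k v = ∑ i ∈ range k, c ^ i * ‖(f ^ i) v‖ := by
  simp only [orbitSeminorm, _root_.sum_apply, smul_apply, Seminorm.comp_apply, coe_normSeminorm,
    NNReal.smul_def, smul_eq_mul, NNReal.coe_pow]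
  rfl

theorem norm_le_orbitSeminorm (hk : k ≠ 0) (v : E) : ‖v‖ ≤ f.orbitSeminorm c k v := by
  rw [orbitSeminorm_apply]
  simpa using single_le_sum (f := fun i ↦ (c : ℝ) ^ i * ‖(f ^ i) v‖) (fun i _ ↦ by positivity)
    (mem_range.2 (Nat.pos_of_ne_zero hk))

theorem orbitSeminorm_le (v : E) :
    f.orbitSeminorm c k v ≤ (∑ i ∈ range k, c ^ i * ‖f ^ i‖) * ‖v‖ := by
  rw [orbitSeminorm_apply, sum_mul]
  refine sum_le_sum fun i _ ↦ ?_
  rw [mul_assoc]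
  gcongr
  exact (f ^ i).le_opNorm v

theorem mul_orbitSeminorm_map_add_norm (v : E) :
    c * f.orbitSeminorm c k (f v) + ‖v‖ = f.orbitSeminorm c k v + c ^ k * ‖(f ^ k) v‖ := by
  simp only [orbitSeminorm_apply, mul_sum]
  rw [← sum_range_succ, sum_range_succ']
  congr 1
  · refine sum_congr rfl fun i _ ↦ ?_
    rw [pow_succ', pow_succ, mul_apply_eq_comp, mul_assoc]
  · simp

theorem orbitSeminorm_map_le {r : ℝ≥0} (hr : 0 < r) (hfk : ‖f ^ k‖ ≤ r ^ k) (v : E) :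
    f.orbitSeminorm r⁻¹ k (f v) ≤ r * f.orbitSeminorm r⁻¹ k v := by
  have hr' : (0 : ℝ) < r := by positivity
  have htail : (r⁻¹ : ℝ) ^ k * ‖(f ^ k) v‖ ≤ ‖v‖ :=
    calc (r⁻¹ : ℝ) ^ k * ‖(f ^ k) v‖ ≤ (r⁻¹ : ℝ) ^ k * (r ^ k * ‖v‖) := by
          gcongr
          exact (f ^ k).le_of_opNorm_le hfk v
      _ = ‖v‖ := by rw [← mul_assoc, ← mul_pow, inv_mul_cancel₀ hr'.ne', one_pow, one_mul]
  have hshift := f.mul_orbitSeminorm_map_add_norm r⁻¹ k v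
  rw [NNReal.coe_inv] at hshift
  have hcontract : (r⁻¹ : ℝ) * f.orbitSeminorm r⁻¹ k (f v) ≤ f.orbitSeminorm r⁻¹ k v := by
    linarith
  rwa [inv_mul_le_iff₀ hr'] at hcontract

end ContinuousLinearMap

theorem spectrum.eventually_nnnorm_pow_lt_of_spectralRadius_lt {A : Type*} [NormedRing A]
    [NormedAlgebra ℂ A] [CompleteSpace A] (a : A) {r : ℝ≥0} (h : spectralRadius ℂ a < r) :
    ∀ᶠ k in atTop, ‖a ^ k‖₊ < r ^ k := by
  filter_upwards [(pow_nnnorm_pow_one_div_tendsto_nhds_spectralRadius a).eventually_lt_const h,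
    eventually_ne_atTop 0] with k hk hk0
  have hk' : (0 : ℝ) < k := by positivity
  rw [one_div, ENNReal.rpow_inv_lt_iff hk'] at hk
  exact_mod_cast hk

theorem spectrum.spectralRadius_le_ofReal_of_forall_norm_le {𝕜 A : Type*} [NormedField 𝕜]
    [Ring A] [Algebra 𝕜 A] {a : A} {ρ : ℝ} (h : ∀ μ ∈ spectrum 𝕜 a, ‖μ‖ ≤ ρ) :
    spectralRadius 𝕜 a ≤ ENNReal.ofReal ρ :=
  iSup₂_le fun μ hμ ↦ by
    simpa [← ENNReal.ofReal_coe_nnreal] using ENNReal.ofReal_le_ofReal (h μ hμ)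

theorem EuclideanSpace.norm_toLp_ofReal_comp {ι : Type*} [Fintype ι] (y : ι → ℝ) :
    ‖WithLp.toLp 2 (((↑) : ℝ → ℂ) ∘ y)‖ = ‖WithLp.toLp 2 y‖ := by
  simp [EuclideanSpace.norm_eq]

open scoped Matrix.Norms.L2Operator in
theorem Matrix.l2_opNorm_le_l2_opNorm_map_ofReal {m n : Type*} [Fintype m] [Fintype n]
    [DecidableEq n] (B : Matrix m n ℝ) : ‖B‖ ≤ ‖B.map ((↑) : ℝ → ℂ)‖ := by
  rw [l2_opNorm_def, l2_opNorm_def]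
  refine ContinuousLinearMap.opNorm_le_bound _ (norm_nonneg _) fun x ↦ ?_
  have hmap : B.map ((↑) : ℝ → ℂ) *ᵥ (((↑) : ℝ → ℂ) ∘ x.ofLp) = ((↑) : ℝ → ℂ) ∘ (B *ᵥ x.ofLp) :=
    funext fun i ↦ (RingHom.map_mulVec Complex.ofRealHom B x.ofLp i).symm
  calc ‖(toEuclideanLin ≪≫ₗ LinearMap.toContinuousLinearMap) B x‖
      = ‖WithLp.toLp 2 (((↑) : ℝ → ℂ) ∘ (B *ᵥ x.ofLp))‖ :=
        (EuclideanSpace.norm_toLp_ofReal_comp _).symm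
    _ = ‖(toEuclideanLin ≪≫ₗ LinearMap.toContinuousLinearMap) (B.map ((↑) : ℝ → ℂ))
          (WithLp.toLp 2 (((↑) : ℝ → ℂ) ∘ x.ofLp))‖ := by rw [← hmap]; rfl
    _ ≤ _ := ContinuousLinearMap.le_opNorm _ _
    _ = _ := by rw [EuclideanSpace.norm_toLp_ofReal_comp, WithLp.toLp_ofLp]

open scoped Matrix.Norms.L2Operator in
theorem Matrix.exists_norm_toEuclideanCLM_pow_le {n : Type*} [Fintype n] [DecidableEq n]
    (A : Matrix n n ℝ) {ρ : ℝ} {r : ℝ≥0}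
    (hρ : ∀ μ, Module.End.HasEigenvalue (toLin' (A.map ((↑) : ℝ → ℂ))) μ → ‖μ‖ ≤ ρ)
    (hρr : ρ < r) (hr : 0 < r) :
    ∃ k ≠ 0, ‖toEuclideanCLM (𝕜 := ℝ) A ^ k‖ ≤ r ^ k := by
  set Aℂ := A.map ((↑) : ℝ → ℂ)
  have hspec : spectralRadius ℂ Aℂ < r := by
    refine (spectrum.spectralRadius_le_ofReal_of_forall_norm_le fun μ hμ ↦ hρ μ ?_).trans_lt ?_
    · rwa [Module.End.hasEigenvalue_iff_mem_spectrum, spectrum_toLin']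
    · rw [← ENNReal.ofReal_coe_nnreal, ENNReal.ofReal_lt_ofReal_iff']
      exact ⟨hρr, hr⟩
  obtain ⟨k, hk, hk0⟩ :=
    ((spectrum.eventually_nnnorm_pow_lt_of_spectralRadius_lt Aℂ hspec).and
      (eventually_ne_atTop 0)).exists
  refine ⟨k, hk0, ?_⟩
  calc ‖toEuclideanCLM (𝕜 := ℝ) A ^ k‖ = ‖A ^ k‖ := by rw [← map_pow]; rfl
    _ ≤ ‖(A ^ k).map ((↑) : ℝ → ℂ)‖ := l2_opNorm_le_l2_opNorm_map_ofReal _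
    _ = ‖Aℂ ^ k‖ := congrArg _ (map_pow Complex.ofRealHom.mapMatrix A k)
    _ ≤ r ^ k := mod_cast hk.le

/-- For every linear map `φ` on `ℝⁿ` (given by a matrix `A`) with spectral radius
`ρ` (the maximal absolute value of a complex eigenvalue), and every `δ > 0`, there
is a norm on `ℝⁿ`, equivalent to the Euclidean norm, for which the operator norm
of `φ` is less than `ρ + δ`. -/
theorem exists_adapted_norm {n : ℕ} (A : Matrix (Fin n) (Fin n) ℝ) (ρ δ : ℝ)
    (hρ : IsGreatest {x : ℝ | ∃ μ : ℂ, Module.End.HasEigenvalue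
      (Matrix.toLin' (A.map (fun t : ℝ => (t : ℂ)))) μ ∧ ‖μ‖ = x} ρ)
    (hδ : 0 < δ) :
    ∃ N : Seminorm ℝ (EuclideanSpace ℝ (Fin n)), (∃ C : ℝ, 0 < C ∧
        ∀ v : EuclideanSpace ℝ (Fin n), C⁻¹ * ‖v‖ ≤ N v ∧ N v ≤ C * ‖v‖) ∧
      ∀ v : EuclideanSpace ℝ (Fin n), N v = 1 →
        N (WithLp.toLp 2 (A.mulVec (v : Fin n → ℝ))) < ρ + δ := by
  obtain ⟨μ₀, -, hμ₀⟩ := hρ.1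
  have hρ0 : 0 ≤ ρ := hμ₀ ▸ norm_nonneg μ₀
  obtain ⟨r, hρr, hrδ⟩ : ∃ r : ℝ≥0, ρ < r ∧ (r : ℝ) < ρ + δ :=
    ⟨(ρ + δ / 2).toNNReal, by rw [Real.coe_toNNReal _ (by positivity)]; linarith,
      by rw [Real.coe_toNNReal _ (by positivity)]; linarith⟩
  have hr : 0 < r := mod_cast hρ0.trans_lt hρr
  obtain ⟨k, hk0, hfk⟩ :=
    A.exists_norm_toEuclideanCLM_pow_le (fun μ hμ ↦ hρ.2 ⟨μ, hμ, rfl⟩) hρr hr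
  set f := Matrix.toEuclideanCLM (𝕜 := ℝ) A
  set S := ∑ i ∈ range k, (r⁻¹ : ℝ) ^ i * ‖f ^ i‖
  have hS : 0 ≤ S := by positivity
  refine ⟨f.orbitSeminorm r⁻¹ k, ⟨1 + S, by positivity, fun v ↦ ⟨?_, ?_⟩⟩, fun v hv ↦ ?_⟩
  · calc (1 + S)⁻¹ * ‖v‖ ≤ ‖v‖ :=
          mul_le_of_le_one_left (norm_nonneg v) (inv_le_one_of_one_le₀ (by simp [hS]))
      _ ≤ _ := f.norm_le_orbitSeminorm _ _ hk0 v
  · calc _ ≤ S * ‖v‖ := f.orbitSeminorm_le _ _ v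
      _ ≤ (1 + S) * ‖v‖ := by gcongr; linarith
  · calc f.orbitSeminorm r⁻¹ k (f v) ≤ r * f.orbitSeminorm r⁻¹ k v :=
          f.orbitSeminorm_map_le k hr hfk v
      _ < ρ + δ := by rw [hv, mul_one]; exact hrδ
end

section
/- Let λ₁, λ₂ be positive reals, not equal to 1, with λ₁ ≠ λ₂, and z₁, z₂, w₁, w₂, a₁, a₂ real numbers with z₁ ≠ 0, w₁ ≠ 0, z₂ ≠ 0, w₂ ≠ 0, a₁ ≠ 0, a₂ ≠ 0. Then the set of pairs (t, t') ∈ ℝ² satisfying λ₁ᵗ z₁ = λ₁^{t'} w₁ + a₁ and λ₂ᵗ z₂ = λ₂^{t'} w₂ + a₂ has at most two elements. -/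
/-!
Write `u = λ₁ᵗ`, `v = λ₁^t'` and `α = log_{λ₁} λ₂`, so that `λ₂ᵗ = uᵅ`. A solution is then determined
by `u`, and `(u, v)` is a point of the open quadrant lying on the line `z₁ u = w₁ v + a₁` and on the
curve `z₂ uᵅ = w₂ vᵅ + a₂`. On the line `v = c u + d` with `d = -a₁ / w₁ ≠ 0`, and the function
`f u = z₂ uᵅ - w₂ (c u + d)ᵅ - a₂` has at most one critical point: there
`z₂ (u / (c u + d))^(α - 1) = c w₂`, and `u ↦ u / (c u + d)` is injective because `d ≠ 0`.
By Rolle's theorem `f` has at most two zeros.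
-/

open Set Real

theorem Set.exists_subset_pair_of_encard_le_two {α : Type*} [Nonempty α] {s : Set α}
    (hs : s.encard ≤ 2) : ∃ p q, s ⊆ {p, q} := by
  rcases s.eq_empty_or_nonempty with rfl | ⟨p, hp⟩
  · exact ⟨Classical.arbitrary α, Classical.arbitrary α, empty_subset _⟩
  have hrest : (s \ {p}).encard ≤ 1 := by
    rw [← encard_sdiff_singleton_add_one hp, (by norm_num : (2 : ℕ∞) = 1 + 1)] at hs
    exact (ENat.add_le_add_iff_right ENat.one_ne_top).mp hs
  have hs' : s = insert p (s \ {p}) := by rw [insert_sdiff_singleton, insert_eq_of_mem hp]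
  rcases encard_le_one_iff_eq.mp hrest with h | ⟨q, hq⟩
  · exact ⟨p, p, by rw [hs', h]; simp⟩
  · exact ⟨p, q, by rw [hs', hq]⟩

theorem encard_zeros_le_encard_deriv_zeros_add_one {f f' : ℝ → ℝ} {s : Set ℝ}
    (hs : s.OrdConnected) (hf : ∀ x ∈ s, HasDerivAt f (f' x) x) :
    {x ∈ s | f x = 0}.encard ≤ {x ∈ s | f' x = 0}.encard + 1 := by
  rcases {x ∈ s | f' x = 0}.finite_or_infinite with hfin | hinf
  swap
  · simp [hinf.encard_eq]
  by_contra! h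
  obtain ⟨t, hts, ht⟩ := exists_subset_encard_eq (Order.add_one_le_of_lt h)
  have htfin : t.Finite := encard_ne_top_iff.mp (by simp [ht, hfin.encard_eq_coe_toFinset_card])
  -- Rolle's theorem puts a critical point of `f` strictly between any two zeros.
  have hcard : htfin.toFinset.card ≤ hfin.toFinset.card + 1 := by
    refine Finset.card_le_of_interleaved fun x hx y hy hxy _ => ?_
    rw [Finite.mem_toFinset] at hx hy
    obtain ⟨⟨hxs, hx0⟩, ⟨hys, hy0⟩⟩ := And.intro (hts hx) (hts hy)
    have hIcc : Icc x y ⊆ s := hs.out hxs hys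
    obtain ⟨c, hc, hc0⟩ := exists_hasDerivAt_eq_zero hxy
      (fun z hz => (hf z (hIcc hz)).continuousAt.continuousWithinAt) (hx0.trans hy0.symm)
      (fun z hz => hf z (hIcc (Ioo_subset_Icc_self hz)))
    exact ⟨c, by simpa using ⟨hIcc (Ioo_subset_Icc_self hc), hc0⟩, hc⟩
  rw [htfin.encard_eq_coe_toFinset_card, hfin.encard_eq_coe_toFinset_card] at ht
  norm_cast at ht
  omega

theorem ordConnected_setOf_affine_pos (c d : ℝ) : {u : ℝ | 0 < c * u + d}.OrdConnected :=
  ⟨fun x hx y hy u hu => by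
    change 0 < c * u + d
    rcases le_total 0 c with hc | hc
    · nlinarith [hu.1, hx.out]
    · nlinarith [hu.2, hy.out]⟩

section
variable {c d z w a α : ℝ}

theorem hasDerivAt_rpow_sub_rpow_affine {u : ℝ} (hu : u ≠ 0) (hv : c * u + d ≠ 0) :
    HasDerivAt (fun u => z * u ^ α - w * (c * u + d) ^ α - a)
      (α * (z * u ^ (α - 1) - c * w * (c * u + d) ^ (α - 1))) u := by
  have hlin : HasDerivAt (fun u => c * u + d) c u := by
    simpa using ((hasDerivAt_id u).const_mul c).add_const d
  exact ((((hasDerivAt_rpow_const (Or.inl hu)).const_mul z).sub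
    ((hlin.rpow_const (Or.inl hv)).const_mul w)).sub_const a).congr_deriv (by ring)

theorem subsingleton_deriv_zeros_rpow_sub_rpow_affine (hz : z ≠ 0) (hd : d ≠ 0) (hα0 : α ≠ 0)
    (hα1 : α ≠ 1) :
    {u ∈ Ioi 0 ∩ {u | 0 < c * u + d} |
      α * (z * u ^ (α - 1) - c * w * (c * u + d) ^ (α - 1)) = 0}.Subsingleton := by
  rintro u ⟨⟨hu, hu'⟩, hu0⟩ v ⟨⟨hv, hv'⟩, hv0⟩
  simp only [mem_Ioi, mem_ofPred_eq, mul_eq_zero, hα0, false_or, sub_eq_zero] at hu hu' hv hv' hu0 hv0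
  have hβ : α - 1 ≠ 0 := sub_ne_zero.mpr hα1
  have key : (u * (c * v + d)) ^ (α - 1) = (v * (c * u + d)) ^ (α - 1) := by
    rw [mul_rpow hu.le hv'.le, mul_rpow hv.le hu'.le]
    apply mul_left_cancel₀ hz
    linear_combination (c * v + d) ^ (α - 1) * hu0 - (c * u + d) ^ (α - 1) * hv0
  have := (rpow_left_inj (by positivity) (by positivity) hβ).mp key
  have : d * (u - v) = 0 := by linear_combination this
  simpa [hd, sub_eq_zero] using this

theorem encard_zeros_rpow_sub_rpow_affine_le_two (hz : z ≠ 0) (hd : d ≠ 0) (hα0 : α ≠ 0)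
    (hα1 : α ≠ 1) :
    {u ∈ Ioi 0 ∩ {u | 0 < c * u + d} | z * u ^ α - w * (c * u + d) ^ α - a = 0}.encard ≤ 2 := by
  refine (encard_zeros_le_encard_deriv_zeros_add_one
    (ordConnected_Ioi.inter (ordConnected_setOf_affine_pos c d))
    fun u hu => hasDerivAt_rpow_sub_rpow_affine hu.1.ne' hu.2.ne').trans ?_
  rw [← one_add_one_eq_two]
  gcongr
  exact encard_le_one_iff_subsingleton.mpr
    (subsingleton_deriv_zeros_rpow_sub_rpow_affine hz hd hα0 hα1)

end

theorem system_has_at_most_two_solutions_general (l₁ l₂ z₁ z₂ w₁ w₂ a₁ a₂ : ℝ)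
    (hl₁ : 0 < l₁) (hl₂ : 0 < l₂) (hl₁1 : l₁ ≠ 1) (hl₂1 : l₂ ≠ 1) (hll : l₁ ≠ l₂)
    (hz₂ : z₂ ≠ 0) (hw₁ : w₁ ≠ 0) (ha₁ : a₁ ≠ 0) :
    ∃ p q : ℝ × ℝ,
      {s : ℝ × ℝ | l₁ ^ s.1 * z₁ = l₁ ^ s.2 * w₁ + a₁ ∧
        l₂ ^ s.1 * z₂ = l₂ ^ s.2 * w₂ + a₂} ⊆ {p, q} := by
  set α := logb l₁ l₂
  have hl₂α : l₂ = l₁ ^ α := (rpow_logb hl₁ hl₁1 hl₂).symm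
  have hα0 : α ≠ 0 := fun h => hl₂1 (by rw [hl₂α, h, rpow_zero])
  have hα1 : α ≠ 1 := fun h => hll (by rw [hl₂α, h, rpow_one])
  have hpow (t : ℝ) : l₂ ^ t = (l₁ ^ t) ^ α := by
    rw [hl₂α, ← rpow_mul hl₁.le, ← rpow_mul hl₁.le, mul_comm]
  have hline {s : ℝ × ℝ} (hs : l₁ ^ s.1 * z₁ = l₁ ^ s.2 * w₁ + a₁) :
      l₁ ^ s.2 = z₁ / w₁ * l₁ ^ s.1 + -a₁ / w₁ := by
    field_simp; linarith
  apply exists_subset_pair_of_encard_le_two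
  refine le_trans (encard_le_encard_of_injOn (f := fun s => l₁ ^ s.1) ?_ ?_)
    (encard_zeros_rpow_sub_rpow_affine_le_two (c := z₁ / w₁) (w := w₂) (a := a₂) hz₂
      (div_ne_zero (neg_ne_zero.mpr ha₁) hw₁) hα0 hα1)
  · rintro s ⟨hs₁, hs₂⟩
    refine ⟨⟨rpow_pos_of_pos hl₁ _, ?_⟩, ?_⟩
    · rw [mem_ofPred_eq, ← hline hs₁]; positivity
    · rw [hpow, hpow, hline hs₁] at hs₂
      linear_combination hs₂
  · rintro s ⟨hs₁, -⟩ s' ⟨hs'₁, -⟩ h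
    have h₁ : s.1 = s'.1 := (rpow_right_inj hl₁ hl₁1).mp h
    have h₂ : s.2 = s'.2 := (rpow_right_inj hl₁ hl₁1).mp (by rw [hline hs₁, hline hs'₁, h₁])
    exact Prod.ext h₁ h₂

/-- The generic case in the orbit-intersection lemma: for distinct positive bases
`λ₁ ≠ λ₂`, both different from 1, and nonzero constants, the system
`λ₁ᵗ z₁ = λ₁^t' w₁ + a₁`, `λ₂ᵗ z₂ = λ₂^t' w₂ + a₂` has at most two solutions `(t, t')`. -/
theorem system_has_at_most_two_solutions (l₁ l₂ z₁ z₂ w₁ w₂ a₁ a₂ : ℝ)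
    (hl₁ : 0 < l₁) (hl₂ : 0 < l₂) (hl₁1 : l₁ ≠ 1) (hl₂1 : l₂ ≠ 1) (hll : l₁ ≠ l₂)
    (hz₁ : z₁ ≠ 0) (hz₂ : z₂ ≠ 0) (hw₁ : w₁ ≠ 0) (hw₂ : w₂ ≠ 0)
    (ha₁ : a₁ ≠ 0) (ha₂ : a₂ ≠ 0) :
    ∃ p q : ℝ × ℝ,
      {s : ℝ × ℝ | l₁ ^ s.1 * z₁ = l₁ ^ s.2 * w₁ + a₁ ∧
        l₂ ^ s.1 * z₂ = l₂ ^ s.2 * w₂ + a₂} ⊆ {p, q} :=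
  system_has_at_most_two_solutions_general l₁ l₂ z₁ z₂ w₁ w₂ a₁ a₂ hl₁ hl₂ hl₁1 hl₂1 hll hz₂ hw₁ ha₁
end

section
/- Let φ ∈ GL_n(ℤ) be a hyperbolic automorphism of ℤⁿ, diagonalizable over ℝ with all eigenvalues positive. Then for every D > 0 there exists N > 0 such that for any collection of m > N distinct points a₁, …, a_m ∈ ℤⁿ, there exist indices i ≠ j with ‖φᵏ(aᵢ) − φᵏ(aⱼ)‖ > D for all k ∈ ℤ. -/
/-!
In eigencoordinates `φᵏ` multiplies the `i`-th coordinate by `μᵢᵏ`. Since `ℤⁿ` is discrete, a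
nonzero lattice vector has a nonzero coordinate in an expanding and in a contracting direction
(otherwise its forward or backward orbit would tend to `0`). Let `W` be the finite set of nonzero
lattice vectors of norm at most `D`. Comparing coordinates shows that `φˢ w₁ + φᵗ w₂ = w₃` with
`wᵢ ∈ W` forces `min (|s|, |t|) < K` for some `K`. If every pair of points of `S` comes `D`-close
at some time, fix `x₀ ∈ S` and such times `kₓ` for the pairs `(x₀, x)`; the previous fact applied
to `x₀ - y = (x₀ - x) + (x - y)` puts all `kₓ` within `2K` of each other, so
`x ↦ (kₓ - k_{x₁}, φ^{kₓ} (x₀ - x))` injects `S \ {x₀}` into `[-2K, 2K] × W`.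
-/

open Filter Topology Finset

lemma exists_pos_forall_le_abs {α : Type*} [Finite α] (f : α → ℝ) :
    ∃ δ > 0, ∀ a, f a ≠ 0 → δ ≤ |f a| := by
  have : ∀ᶠ δ in 𝓝 (0 : ℝ), ∀ a, f a ≠ 0 → δ ≤ |f a| := eventually_all.2 fun a => by
    by_cases h : f a = 0
    · simp [h]
    · exact (eventually_le_nhds (abs_pos.2 h)).mono fun _ hδ _ => hδ
  obtain ⟨δ, h, hpos⟩ := ((eventually_nhdsWithin_of_eventually_nhds (s := Set.Ioi 0) this).and
    self_mem_nhdsWithin).exists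
  exact ⟨δ, hpos, h⟩

lemma Module.Basis.repr_apply_of_apply_eq_smul {ι R M : Type*} [CommSemiring R] [AddCommMonoid M]
    [Module R M] (B : Module.Basis ι R M) {f : M →ₗ[R] M} {μ : ι → R}
    (hf : ∀ i, f (B i) = μ i • B i) (v : M) (i : ι) : B.repr (f v) i = μ i * B.repr v i := by
  classical
  have : (B.coord i).comp f = μ i • B.coord i := B.ext fun j => by
    by_cases hij : i = j
    · subst hij; simp [hf]
    · simp [hf, hij]
  exact LinearMap.congr_fun this v

lemma Module.Basis.repr_intCast_mulVec {ι : Type*} [Fintype ι] (B : Module.Basis ι ℝ (ι → ℝ))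
    {M : Matrix ι ι ℤ} {μ : ι → ℝ}
    (hM : ∀ j, (M.map (fun x : ℤ => (x : ℝ))).mulVec (B j) = μ j • B j) (z : ι → ℤ) (i : ι) :
    B.repr (fun j => (M.mulVec z j : ℝ)) i = μ i * B.repr (fun j => (z j : ℝ)) i := by
  have hcast : (fun j => (M.mulVec z j : ℝ)) = (M.map (fun x : ℤ => (x : ℝ))).mulVec fun j => z j :=
    funext (RingHom.map_mulVec (Int.castRingHom ℝ) M z)
  rw [hcast]
  exact B.repr_apply_of_apply_eq_smul (f := Matrix.mulVecLin _) hM _ i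

lemma norm_le_sqrt_sum_sq_intCast {ι : Type*} [Fintype ι] (d : ι → ℤ) :
    ‖d‖ ≤ √(∑ i, ((d i : ℝ)) ^ 2) :=
  (pi_norm_le_iff_of_nonneg (Real.sqrt_nonneg _)).2 fun i => by
    rw [Int.norm_eq_abs, ← Real.sqrt_sq_eq_abs]
    exact Real.sqrt_le_sqrt (single_le_sum (fun j _ => sq_nonneg (d j : ℝ)) (mem_univ i))

lemma Matrix.GeneralLinearGroup.toLin_zpow_smul {n : Type*} [Fintype n] [DecidableEq n]
    {R : Type*} [CommRing R] (M : GL n R) (k : ℤ) (z : n → R) :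
    toLin M ^ k • z = ((M ^ k : GL n R) : Matrix n n R).mulVec z := by
  rw [← map_zpow]
  rfl

lemma eventually_eq_zero_comap_linearEquiv_comp_intCast {ι : Type*} [Fintype ι]
    (e : (ι → ℝ) ≃ₗ[ℝ] ι → ℝ) :
    ∀ᶠ z in (𝓝 0).comap (fun z : ι → ℤ => e fun i => (z i : ℝ)), z = 0 := by
  have hind : IsInducing (fun z : ι → ℤ => e fun i => (z i : ℝ)) :=
    e.toContinuousLinearEquiv.toHomeomorph.isInducing.comp
      (IsInducing.piMap fun _ => Int.isClosedEmbedding_coe_real.isInducing)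
  have h0 : (fun i => ((0 : ι → ℤ) i : ℝ)) = 0 := funext fun _ => Int.cast_zero
  rw [← e.map_zero, ← h0, ← hind.nhds_eq_comap, nhds_discrete]
  exact eventually_pure.2 rfl

section Pigeonhole

variable {G Λ : Type*} [Group G] [AddCommGroup Λ] [DistribMulAction G Λ] {g : G} {W : Finset Λ}
  {K : ℕ}

lemma zpow_sub_smul_zpow_smul_add (g : G) (a b c : ℤ) (u v : Λ) :
    g ^ (b - a) • g ^ a • u + g ^ (b - c) • g ^ c • v = g ^ b • (u + v) := by
  simp only [smul_smul, ← zpow_add, sub_add_cancel, smul_add]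

variable (hW : ∀ w ∈ W, -w ∈ W)
  (hK : ∀ s t : ℤ, ∀ w₁ ∈ W, ∀ w₂ ∈ W, ∀ w₃ ∈ W, g ^ s • w₁ + g ^ t • w₂ = w₃ → |s| < K ∨ |t| < K)
include hW hK

lemma abs_sub_le_of_zpow_smul_sub_mem {x₀ x y : Λ} {a b k : ℤ} (ha : g ^ a • (x₀ - x) ∈ W)
    (hb : g ^ b • (x₀ - y) ∈ W) (hk : g ^ k • (x - y) ∈ W) : |a - b| ≤ 2 * K := by
  have h₁ := hK (b - a) (b - k) _ ha _ hk _ hb <| by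
    rw [zpow_sub_smul_zpow_smul_add, sub_add_sub_cancel]
  have h₂ := hK (a - b) (a - k) _ hb _ (hW _ hk) _ ha <| by
    rw [← smul_neg, zpow_sub_smul_zpow_smul_add, neg_sub, sub_add_sub_cancel]
  simp only [abs_lt] at h₁ h₂
  rw [abs_le]
  omega

theorem card_le_of_forall_exists_zpow_smul_sub_mem {S : Finset Λ}
    (hS : ∀ x ∈ S, ∀ y ∈ S, x ≠ y → ∃ k : ℤ, g ^ k • (x - y) ∈ W) :
    #S ≤ (4 * K + 1) * #W + 1 := by
  classical
  by_cases hS₁ : #S ≤ 1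
  · omega
  obtain ⟨x₀, hx₀, x₁, hx₁, hne⟩ := one_lt_card.1 (not_le.1 hS₁)
  have hx₁' : x₁ ∈ S.erase x₀ := mem_erase.2 ⟨hne.symm, hx₁⟩
  have : ∀ x, ∃ k : ℤ, x ∈ S.erase x₀ → g ^ k • (x₀ - x) ∈ W := fun x => by
    by_cases hx : x ∈ S.erase x₀
    · obtain ⟨k, hk⟩ := hS x₀ hx₀ x (mem_of_mem_erase hx) (ne_of_mem_erase hx).symm
      exact ⟨k, fun _ => hk⟩
    · exact ⟨0, fun h => absurd h hx⟩
  choose k hk using this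
  have hmaps : Set.MapsTo (fun x => (k x - k x₁, g ^ k x • (x₀ - x))) (S.erase x₀)
      (Icc (-(2 * K : ℤ)) (2 * K) ×ˢ W : Finset (ℤ × Λ)) := by
    intro x hx
    refine mem_coe.2 <| mem_product.2 ⟨mem_Icc.2 (abs_le.1 ?_), hk x hx⟩
    by_cases hxx₁ : x = x₁
    · simp [hxx₁]
    obtain ⟨l, hl⟩ := hS x (mem_of_mem_erase hx) x₁ hx₁ hxx₁
    exact abs_sub_le_of_zpow_smul_sub_mem hW hK (hk x hx) (hk x₁ hx₁') hl
  have hinj : Set.InjOn (fun x => (k x - k x₁, g ^ k x • (x₀ - x))) (S.erase x₀) := by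
    intro x _ y _ h
    simp only [Prod.mk.injEq, sub_left_inj] at h
    rw [h.1, smul_left_cancel_iff, sub_right_inj] at h
    exact h.2
  have := card_le_card_of_injOn _ hmaps hinj
  rw [card_product, Int.card_Icc, card_erase_of_mem hx₀,
    show 2 * (K : ℤ) + 1 - -(2 * K) = (4 * K + 1 : ℕ) by push_cast; ring, Int.toNat_natCast] at this
  omega

end Pigeonhole

section Hyperbolic

variable {G Λ ι : Type*} [Group G] [AddCommGroup Λ] [DistribMulAction G Λ] {g : G}
  {c : Λ →+ ι → ℝ} {μ : ι → ℝ}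

lemma apply_zpow_smul_of_apply_smul (hμ : ∀ i, μ i ≠ 0) (hc : ∀ z i, c (g • z) i = μ i * c z i)
    (k : ℤ) (z : Λ) (i : ι) : c (g ^ k • z) i = μ i ^ k * c z i := by
  induction k using Int.induction_on generalizing z with
  | zero => simp
  | succ k ih => rw [zpow_add_one, mul_smul, ih, hc, zpow_add_one₀ (hμ i), mul_assoc]
  | pred k ih =>
    have hinv : c (g⁻¹ • z) i = (μ i)⁻¹ * c z i := by
      rw [eq_inv_mul_iff_mul_eq₀ (hμ i), ← hc, smul_inv_smul]
    rw [zpow_sub_one, mul_smul, ih, hinv, zpow_sub_one₀ (hμ i), mul_assoc]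

variable (hμ : ∀ i, 0 < μ i) (hc : ∀ z i, c (g • z) i = μ i * c z i)
include hμ hc

lemma apply_zpow_smul_eq_exp_mul (k : ℤ) (z : Λ) (i : ι) :
    c (g ^ k • z) i = Real.exp (k * Real.log (μ i)) * c z i := by
  rw [apply_zpow_smul_of_apply_smul (fun i => (hμ i).ne') hc, mul_comm (k : ℝ),
    ← Real.rpow_def_of_pos (hμ i), Real.rpow_intCast]

section Estimates

variable {s t : ℤ} {w₁ w₂ w₃ : Λ} (heq : g ^ s • w₁ + g ^ t • w₂ = w₃) {i : ι} {T R : ℝ}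
include heq

lemma exp_mul_apply_add_exp_mul_apply :
    Real.exp (s * Real.log (μ i)) * c w₁ i + Real.exp (t * Real.log (μ i)) * c w₂ i = c w₃ i := by
  rw [← apply_zpow_smul_eq_exp_mul hμ hc, ← apply_zpow_smul_eq_exp_mul hμ hc, ← Pi.add_apply,
    ← map_add, heq]

lemma exp_mul_abs_apply_left_le (hs : T ≤ s * Real.log (μ i)) (ht : t * Real.log (μ i) ≤ 0)
    (h₂ : |c w₂ i| ≤ R) (h₃ : |c w₃ i| ≤ R) : Real.exp T * |c w₁ i| ≤ R + R := calc
  Real.exp T * |c w₁ i| ≤ Real.exp (s * Real.log (μ i)) * |c w₁ i| := by gcongr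
  _ = |c w₃ i - Real.exp (t * Real.log (μ i)) * c w₂ i| := by
    rw [← exp_mul_apply_add_exp_mul_apply hμ hc heq, add_sub_cancel_right, abs_mul,
      abs_of_pos (Real.exp_pos _)]
  _ ≤ |c w₃ i| + |Real.exp (t * Real.log (μ i)) * c w₂ i| := abs_sub _ _
  _ ≤ R + 1 * R := by
    rw [abs_mul, abs_of_pos (Real.exp_pos _)]
    gcongr
    exact Real.exp_le_one_iff.2 ht
  _ = R + R := by rw [one_mul]

lemma exp_mul_abs_apply_right_le (hs : s * Real.log (μ i) ≤ -T) (ht : t * Real.log (μ i) ≤ -T)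
    (h₁ : |c w₁ i| ≤ R) (h₂ : |c w₂ i| ≤ R) : Real.exp T * |c w₃ i| ≤ R + R := calc
  Real.exp T * |c w₃ i| ≤ Real.exp T * (Real.exp (s * Real.log (μ i)) * |c w₁ i| +
      Real.exp (t * Real.log (μ i)) * |c w₂ i|) := by
    rw [← exp_mul_apply_add_exp_mul_apply hμ hc heq]
    gcongr
    refine (abs_add_le _ _).trans_eq ?_
    simp only [abs_mul, abs_of_pos (Real.exp_pos _)]
  _ = Real.exp (T + s * Real.log (μ i)) * |c w₁ i| +
      Real.exp (T + t * Real.log (μ i)) * |c w₂ i| := by simp only [Real.exp_add]; ring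
  _ ≤ 1 * R + 1 * R := by
    gcongr <;> exact Real.exp_le_one_iff.2 (by linarith)
  _ = R + R := by rw [one_mul]

end Estimates

variable (hμ₁ : ∀ i, μ i ≠ 1) (hdisc : ∀ᶠ z in (𝓝 0).comap c, z = 0)
include hμ₁ hdisc

lemma exists_pos_mul_log_and_apply_ne_zero {z : Λ} (hz : z ≠ 0) {s : ℤ} (hs : s ≠ 0) :
    ∃ i, 0 < s * Real.log (μ i) ∧ c z i ≠ 0 := by
  by_contra! h
  have hlim : Tendsto (fun m : ℕ => c (g ^ (s * m) • z)) atTop (𝓝 0) := by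
    refine tendsto_pi_nhds.2 fun i => ?_
    simp only [apply_zpow_smul_eq_exp_mul hμ hc, Pi.zero_apply]
    by_cases hzi : c z i = 0
    · simp [hzi]
    have hneg : s * Real.log (μ i) < 0 := lt_of_le_of_ne (not_lt.1 (mt (h i) hzi))
      (mul_ne_zero (Int.cast_ne_zero.2 hs) (Real.log_ne_zero_of_pos_of_ne_one (hμ i) (hμ₁ i)))
    have := (Real.tendsto_exp_atBot.comp
      (tendsto_natCast_atTop_atTop.atTop_mul_const_of_neg hneg)).mul_const (c z i)
    rw [zero_mul] at this
    convert this using 3 with m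
    simp only [Function.comp_apply, Int.cast_mul, Int.cast_natCast]
    ring_nf
  obtain ⟨m, hm⟩ := (tendsto_comap_iff.2 hlim |>.eventually hdisc).exists
  exact hz ((smul_eq_zero_iff_eq _).1 hm)

variable [Fintype ι]

theorem exists_abs_lt_or_abs_lt_of_zpow_smul_add_zpow_smul_eq (W : Finset Λ)
    (hW : ∀ w ∈ W, w ≠ 0) : ∃ K : ℕ, ∀ s t : ℤ, ∀ w₁ ∈ W, ∀ w₂ ∈ W, ∀ w₃ ∈ W,
      g ^ s • w₁ + g ^ t • w₂ = w₃ → |s| < K ∨ |t| < K := by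
  obtain ⟨R, hR⟩ := Finite.bddAbove_range fun p : W × ι => |c p.1 p.2|
  have hR_le : ∀ w ∈ W, ∀ i, |c w i| ≤ R := fun w hw i =>
    hR (Set.mem_range_self (⟨⟨w, hw⟩, i⟩ : W × ι))
  obtain ⟨δ₁, hδ₁, hlog⟩ := exists_pos_forall_le_abs fun i => Real.log (μ i)
  obtain ⟨δ₂, hδ₂, hcδ⟩ := exists_pos_forall_le_abs fun p : W × ι => c p.1 p.2
  set δ := min δ₁ δ₂
  have hδ : 0 < δ := lt_min hδ₁ hδ₂
  obtain ⟨K, hK, hK₁⟩ : ∃ K : ℕ, R + R < Real.exp (K * δ) * δ ∧ 1 ≤ K :=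
    (((Real.tendsto_exp_atTop.comp (tendsto_natCast_atTop_atTop.atTop_mul_const hδ)).atTop_mul_const
      hδ).eventually_gt_atTop _ |>.and (eventually_ge_atTop 1)).exists
  have hfar : ∀ u : ℤ, K ≤ |u| → ∀ i, K * δ ≤ |u * Real.log (μ i)| := fun u hu i => by
    rw [abs_mul, ← Int.cast_abs]
    refine mul_le_mul (by exact_mod_cast hu) ((min_le_left δ₁ δ₂).trans (hlog i ?_)) hδ.le
      (by positivity)
    exact Real.log_ne_zero_of_pos_of_ne_one (hμ i) (hμ₁ i)
  refine ⟨K, fun s t w₁ h₁ w₂ h₂ w₃ h₃ heq => ?_⟩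
  by_contra! ⟨hs, ht⟩
  have hst : s * t ≠ 0 :=
    mul_ne_zero (by rintro rfl; simp at hs; omega) (by rintro rfl; simp at ht; omega)
  suffices ∃ w ∈ W, ∃ i, c w i ≠ 0 ∧ Real.exp (K * δ) * |c w i| ≤ R + R by
    obtain ⟨w, hw, i, hne, hle⟩ := this
    have := mul_le_mul_of_nonneg_left ((min_le_right δ₁ δ₂).trans (hcδ ⟨⟨w, hw⟩, i⟩ hne))
      (Real.exp_pos (K * δ)).le
    linarith
  rcases hst.lt_or_gt with hst | hst
  · -- a coordinate of `w₁` expanded by `g ^ s` is contracted by `g ^ t`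
    obtain ⟨i, hi, hne⟩ := exists_pos_mul_log_and_apply_ne_zero hμ hc hμ₁ hdisc (hW w₁ h₁)
      (left_ne_zero_of_mul hst.ne)
    refine ⟨w₁, h₁, i, hne,
      exp_mul_abs_apply_left_le hμ hc heq ?_ ?_ (hR_le w₂ h₂ i) (hR_le w₃ h₃ i)⟩
    · simpa only [abs_of_pos hi] using hfar s hs i
    · have : (s : ℝ) * t < 0 := by exact_mod_cast hst
      nlinarith [mul_neg_of_neg_of_pos this hi, mul_self_nonneg (s : ℝ)]
  · -- a coordinate of `w₃` contracted by `g ^ s` is also contracted by `g ^ t`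
    obtain ⟨i, hi, hne⟩ := exists_pos_mul_log_and_apply_ne_zero hμ hc hμ₁ hdisc (hW w₃ h₃)
      (neg_ne_zero.2 (left_ne_zero_of_mul hst.ne'))
    push_cast at hi
    have hsi : s * Real.log (μ i) < 0 := by linarith
    have hti : t * Real.log (μ i) < 0 := by
      have : (0 : ℝ) < s * t := by exact_mod_cast hst
      nlinarith [mul_neg_of_pos_of_neg this hsi, mul_self_nonneg (s : ℝ)]
    refine ⟨w₃, h₃, i, hne,
      exp_mul_abs_apply_right_le hμ hc heq ?_ ?_ (hR_le w₁ h₁ i) (hR_le w₂ h₂ i)⟩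
    · have := hfar s hs i; rw [abs_of_neg hsi] at this; linarith
    · have := hfar t ht i; rw [abs_of_neg hti] at this; linarith

end Hyperbolic

/-- For a hyperbolic automorphism `φ ∈ GL_n(ℤ)`, diagonalizable over `ℝ` with all
eigenvalues positive: for every `D > 0` there is `N` such that any collection of
more than `N` distinct lattice points contains a pair whose images under every
iterate `φᵏ` (`k ∈ ℤ`) are at Euclidean distance greater than `D`. -/
theorem exists_pair_far_in_all_iterates {n : ℕ}
    (M : Matrix.GeneralLinearGroup (Fin n) ℤ)
    (hdiag : ∃ (v : Fin n → Fin n → ℝ) (μ : Fin n → ℝ),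
      LinearIndependent ℝ v ∧ (∀ i, 0 < μ i ∧ μ i ≠ 1) ∧
      ∀ i, ((M : Matrix (Fin n) (Fin n) ℤ).map (fun x : ℤ => (x : ℝ))).mulVec (v i)
        = μ i • v i) :
    ∀ D : ℝ, 0 < D → ∃ N : ℕ, ∀ S : Finset (Fin n → ℤ), N < S.card →
      ∃ x ∈ S, ∃ y ∈ S, x ≠ y ∧ ∀ k : ℤ,
        D < Real.sqrt (∑ i, ((((M ^ k : Matrix.GeneralLinearGroup (Fin n) ℤ) :
          Matrix (Fin n) (Fin n) ℤ).mulVec x i -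
            ((M ^ k : Matrix.GeneralLinearGroup (Fin n) ℤ) :
          Matrix (Fin n) (Fin n) ℤ).mulVec y i : ℤ) : ℝ) ^ 2) := by
  obtain ⟨v, μ, hv, hμ, hMv⟩ := hdiag
  intro D _
  let B : Module.Basis (Fin n) ℝ (Fin n → ℝ) :=
    basisOfLinearIndependentOfCardEqFinrank' v hv (by simp)
  let c : (Fin n → ℤ) →+ Fin n → ℝ :=
    B.equivFun.toLinearMap.toAddMonoidHom.comp ((Int.castAddHom ℝ).compLeft (Fin n))
  have hc : ∀ z i, c (Matrix.GeneralLinearGroup.toLin M • z) i = μ i * c z i :=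
    B.repr_intCast_mulVec fun j => by rw [coe_basisOfLinearIndependentOfCardEqFinrank', hMv]
  have hfin : {w : Fin n → ℤ | w ≠ 0 ∧ ‖w‖ ≤ D}.Finite :=
    (isCompact_closedBall 0 D).finite_of_discrete.subset fun w hw => mem_closedBall_zero_iff.2 hw.2
  obtain ⟨K, hK⟩ := exists_abs_lt_or_abs_lt_of_zpow_smul_add_zpow_smul_eq (fun i => (hμ i).1) hc
    (fun i => (hμ i).2) (eventually_eq_zero_comap_linearEquiv_comp_intCast B.equivFun) hfin.toFinset
    fun w hw => (hfin.mem_toFinset.1 hw).1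
  refine ⟨(4 * K + 1) * #hfin.toFinset + 1, fun S hS => ?_⟩
  by_contra! hclose
  refine hS.not_ge (card_le_of_forall_exists_zpow_smul_sub_mem (fun w hw => ?_) hK
    fun x hx y hy hxy => (hclose x hx y hy hxy).imp fun k hk => hfin.mem_toFinset.2 ⟨?_, ?_⟩)
  · obtain ⟨hw0, hwD⟩ := hfin.mem_toFinset.1 hw
    exact hfin.mem_toFinset.2 ⟨neg_ne_zero.2 hw0, by rwa [norm_neg]⟩
  · exact (smul_eq_zero_iff_eq _).not.2 (sub_ne_zero.2 hxy)
  · rw [Matrix.GeneralLinearGroup.toLin_zpow_smul, Matrix.mulVec_sub]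
    exact (norm_le_sqrt_sum_sq_intCast _).trans hk
end

section
/- Let φ ∈ GL_n(ℤ) be a hyperbolic, ℝ-diagonalizable automorphism with positive eigenvalues, and let G = ℤⁿ ⋊_φ ℤ with generator t of the ℤ factor. Then the cyclic subgroup H = ⟨t⟩ has bounded packing in G. -/
/-!
A coset `g⟨t⟩` only depends on the `ℤⁿ`-coordinate `a` of `g`, and if `g⟨t⟩` and `g'⟨t⟩` come
within distance `r`, then `a' - a = φᵖ w` for some `p ∈ ℤ` and some nonzero `w` from the finite set
of `ℤⁿ`-coordinates of the `r`-ball. Colour pairs of cosets by `w`: by Ramsey's theorem many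
pairwise close cosets contain a monochromatic triangle, i.e. `φ^p₁ w + φ^p₂ w = φ^p₃ w`. In an
eigenbasis, every eigenvalue `λ` occurring in `w` solves `λ^p₁ + λ^p₂ = λ^p₃`, which has at most
one positive solution; so `w` is an integral eigenvector of `φ` with eigenvalue `λ ≠ 1`, and
`φᵖ w = λᵖ w` cannot stay integral as `λᵖ → 0`.
-/

open Pointwise

/-- The automorphism of `ℤⁿ` (written multiplicatively) induced by `M ∈ GL_n(ℤ)`. -/
def matAut {n : ℕ} (M : Matrix.GeneralLinearGroup (Fin n) ℤ) :
    MulAut (Multiplicative (Fin n → ℤ)) :=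
  AddEquiv.toMultiplicative
  { toFun := fun v => (M : Matrix (Fin n) (Fin n) ℤ).mulVec v
    invFun := fun v => ((M⁻¹ : Matrix.GeneralLinearGroup (Fin n) ℤ) :
      Matrix (Fin n) (Fin n) ℤ).mulVec v
    left_inv := fun v => by
      show ((M⁻¹ : Matrix.GeneralLinearGroup (Fin n) ℤ) :
        Matrix (Fin n) (Fin n) ℤ).mulVec ((M : Matrix (Fin n) (Fin n) ℤ).mulVec v) = v
      rw [Matrix.mulVec_mulVec, ← Matrix.GeneralLinearGroup.coe_mul, inv_mul_cancel]
      simp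
    right_inv := fun v => by
      show (M : Matrix (Fin n) (Fin n) ℤ).mulVec
        (((M⁻¹ : Matrix.GeneralLinearGroup (Fin n) ℤ) :
          Matrix (Fin n) (Fin n) ℤ).mulVec v) = v
      rw [Matrix.mulVec_mulVec, ← Matrix.GeneralLinearGroup.coe_mul, mul_inv_cancel]
      simp
    map_add' := fun v w => by
      show (M : Matrix (Fin n) (Fin n) ℤ).mulVec (v + w) = _
      rw [Matrix.mulVec_add] }

/-- The action of `ℤ` on `ℤⁿ` given by iterating `M ∈ GL_n(ℤ)`. -/
def matAction {n : ℕ} (M : Matrix.GeneralLinearGroup (Fin n) ℤ) :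
    Multiplicative ℤ →* MulAut (Multiplicative (Fin n → ℤ)) :=
  zpowersHom (MulAut (Multiplicative (Fin n → ℤ))) (matAut M)

/-- The semidirect product `ℤⁿ ⋊_φ ℤ`. -/
abbrev SDP {n : ℕ} (M : Matrix.GeneralLinearGroup (Fin n) ℤ) : Type :=
  SemidirectProduct (Multiplicative (Fin n → ℤ)) (Multiplicative ℤ) (matAction M)

/-- The generator `t` of the `ℤ`-factor of `ℤⁿ ⋊_φ ℤ`. -/
def tGen {n : ℕ} (M : Matrix.GeneralLinearGroup (Fin n) ℤ) : SDP M :=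
  SemidirectProduct.inr (Multiplicative.ofAdd (1 : ℤ))

open Finset in
theorem exists_monochromatic_triangle {α β : Type*} (m : ℕ) :
    ∃ R : ℕ, ∀ (A : Finset α) (W : Finset β) (c : α → α → β), #W ≤ m → R ≤ #A →
      (∀ i ∈ A, ∀ j ∈ A, i ≠ j → c i j ∈ W) →
      ∃ i ∈ A, ∃ j ∈ A, ∃ k ∈ A, i ≠ j ∧ j ≠ k ∧ i ≠ k ∧ c i j = c j k ∧ c i j = c i k := by
  classical
  induction m with
  | zero =>
    refine ⟨2, fun A W c hW hA hc => ?_⟩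
    obtain ⟨i, hi, j, hj, hij⟩ := one_lt_card.mp (by omega : 1 < #A)
    simpa [card_eq_zero.mp (Nat.le_zero.mp hW)] using hc i hi j hj hij
  | succ m ih =>
    obtain ⟨R, hR⟩ := ih
    refine ⟨(m + 1) * R + 2, fun A W c hW hA hc => ?_⟩
    obtain ⟨a, ha⟩ : A.Nonempty := card_pos.mp (by omega)
    have hrest : ∀ j ∈ A.erase a, c a j ∈ W := fun j hj =>
      hc a ha j (mem_of_mem_erase hj) (ne_of_mem_erase hj).symm
    obtain ⟨w, hwW, hJ⟩ := exists_lt_card_fiber_of_mul_lt_card_of_maps_to hrest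
      (n := R) (by have := Nat.mul_le_mul_right R hW; rw [card_erase_of_mem ha]; omega)
    set J := {j ∈ A.erase a | c a j = w}
    have hJA : J ⊆ A := (filter_subset _ _).trans (erase_subset _ _)
    have hJa : ∀ j ∈ J, j ≠ a ∧ c a j = w := fun j hj =>
      ⟨ne_of_mem_erase (mem_filter.mp hj).1, (mem_filter.mp hj).2⟩
    by_cases hw : ∃ i ∈ J, ∃ j ∈ J, i ≠ j ∧ c i j = w
    · obtain ⟨i, hi, j, hj, hij, hcij⟩ := hw
      exact ⟨a, ha, i, hJA hi, j, hJA hj, (hJa i hi).1.symm, hij, (hJa j hj).1.symm,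
        by rw [(hJa i hi).2, hcij], by rw [(hJa i hi).2, (hJa j hj).2]⟩
    · push Not at hw
      obtain ⟨i, hi, j, hj, k, hk, hrel⟩ := hR J (W.erase w) c
        (by rw [card_erase_of_mem hwW]; omega) hJ.le
        fun i hi j hj hij => mem_erase.mpr ⟨hw i hi j hj hij, hc i (hJA hi) j (hJA hj) hij⟩
      exact ⟨i, hJA hi, j, hJA hj, k, hJA hk, hrel⟩

theorem Set.Finite.setOf_prod_of_length_le {G : Type*} [Monoid G] {T : Set G} (hT : T.Finite)
    (m : ℕ) : {g : G | ∃ l : List G, (∀ x ∈ l, x ∈ T) ∧ l.length ≤ m ∧ l.prod = g}.Finite := by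
  have : Finite T := hT
  refine ((List.finite_length_le T m).image fun l => (l.map Subtype.val).prod).subset ?_
  rintro g ⟨l, hl, hlen, rfl⟩
  lift l to List T using hl
  exact ⟨l, by simpa using hlen, rfl⟩

theorem IsWordMetric.exists_finset_inv_mul_mem {G : Type*} [Group G] {d : G → G → ℝ}
    (hd : IsWordMetric d) (r : ℝ) : ∃ B : Finset G, ∀ x y, d x y < r → x⁻¹ * y ∈ B := by
  obtain ⟨S, hS, hdS⟩ := hd
  have hfin := Set.Finite.setOf_prod_of_length_le (S.finite_toSet.union S.finite_toSet.inv) ⌈r⌉₊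
  refine ⟨hfin.toFinset, fun x y hxy => ?_⟩
  have hgen : x⁻¹ * y ∈ Submonoid.closure ((S : Set G) ∪ (S : Set G)⁻¹) := by
    rw [← Subgroup.closure_toSubmonoid, hS]; trivial
  obtain ⟨l₀, hl₀, hprod₀⟩ := Submonoid.exists_list_of_mem_closure hgen
  rw [hdS] at hxy
  obtain ⟨_, ⟨l, hl, hprod, rfl⟩, hlen⟩ :=
    exists_lt_of_csInf_lt (s := {x : ℝ | ∃ l : List G, _}) ⟨_, l₀, hl₀, hprod₀, rfl⟩ hxy
  exact hfin.mem_toFinset.mpr ⟨l, hl, Nat.cast_le.mp ((hlen.trans_le (Nat.le_ceil r)).le), hprod⟩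

theorem zpow_add_zpow_strictMonoOn {e₁ e₂ : ℤ} (h₁ : 0 < e₁) (h₂ : 0 < e₂) :
    StrictMonoOn (fun x : ℝ => x ^ e₁ + x ^ e₂) {x | 0 ≤ x} :=
  (zpow_left_strictMonoOn₀ h₁).add (zpow_left_strictMonoOn₀ h₂)

theorem eq_of_zpow_add_zpow_eq_one {a b : ℝ} (ha : 0 < a) (hb : 0 < b) {e₁ e₂ : ℤ}
    (hA : a ^ e₁ + a ^ e₂ = 1) (hB : b ^ e₁ + b ^ e₂ = 1) : a = b := by
  -- both summands are `< 1`, so both exponents are positive if `x < 1` and negative if `x > 1`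
  have hsign : ∀ x : ℝ, 0 < x → x ^ e₁ + x ^ e₂ = 1 → (0 < e₁ ∧ 0 < e₂) ∨ (e₁ < 0 ∧ e₂ < 0) := by
    intro x hx hsum
    have h₁ : x ^ e₁ < 1 := by linarith [zpow_pos hx e₂]
    have h₂ : x ^ e₂ < 1 := by linarith [zpow_pos hx e₁]
    rcases lt_trichotomy x 1 with hlt | rfl | hgt
    · simp_all [zpow_lt_one_iff_right_of_lt_one₀ hx hlt]
    · norm_num at hsum
    · simp_all [zpow_lt_one_iff_right₀ hgt]
  rcases hsign a ha hA with hpos | hneg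
  · exact (zpow_add_zpow_strictMonoOn hpos.1 hpos.2).injOn ha.le hb.le (hA.trans hB.symm)
  · have hinv : ∀ x : ℝ, x⁻¹ ^ (-e₁) + x⁻¹ ^ (-e₂) = x ^ e₁ + x ^ e₂ := by
      simp [inv_zpow']
    refine inv_injective ((zpow_add_zpow_strictMonoOn (neg_pos.mpr hneg.1)
      (neg_pos.mpr hneg.2)).injOn (inv_pos.mpr ha).le (inv_pos.mpr hb).le ?_)
    simp only [hinv, hA, hB]

theorem eq_of_zpow_add_zpow_eq_zpow {a b : ℝ} (ha : 0 < a) (hb : 0 < b) {p₁ p₂ p₃ : ℤ}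
    (hA : a ^ p₁ + a ^ p₂ = a ^ p₃) (hB : b ^ p₁ + b ^ p₂ = b ^ p₃) : a = b := by
  have hnorm : ∀ x : ℝ, 0 < x → x ^ p₁ + x ^ p₂ = x ^ p₃ →
      x ^ (p₁ - p₃) + x ^ (p₂ - p₃) = 1 := by
    intro x hx h
    rw [zpow_sub₀ hx.ne', zpow_sub₀ hx.ne', ← add_div, h, div_self (zpow_pos hx p₃).ne']
  exact eq_of_zpow_add_zpow_eq_one ha hb (hnorm a ha hA) (hnorm b hb hB)

theorem exists_abs_zpow_mul_lt_one {x : ℝ} (hx₀ : 0 < x) (hx₁ : x ≠ 1) (c : ℝ) :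
    ∃ p : ℤ, |x ^ p * c| < 1 := by
  have hsmall : ∀ y : ℝ, 0 < y → y < 1 → ∃ m : ℕ, |y ^ m * c| < 1 := by
    intro y hy₀ hy₁
    obtain ⟨m, hm⟩ := exists_pow_lt_of_lt_one (by positivity : 0 < 1 / (|c| + 1)) hy₁
    refine ⟨m, ?_⟩
    rw [abs_mul, abs_of_pos (pow_pos hy₀ m)]
    calc y ^ m * |c| ≤ 1 / (|c| + 1) * |c| := by gcongr
      _ < 1 := by rw [div_mul_eq_mul_div, one_mul, div_lt_one (by positivity)]; linarith
  rcases hx₁.lt_or_gt with hlt | hgt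
  · obtain ⟨m, hm⟩ := hsmall x hx₀ hlt
    exact ⟨m, by simpa using hm⟩
  · obtain ⟨m, hm⟩ := hsmall x⁻¹ (inv_pos.mpr hx₀) (inv_lt_one_of_one_lt₀ hgt)
    exact ⟨-m, by simpa using hm⟩

section Eigenbasis

open Matrix

variable {ι κ : Type*} [Fintype ι] [DecidableEq ι]

theorem Module.Basis.repr_zpow_mulVec {K : Type*} [Field K] (b : Module.Basis κ K (ι → K))
    {A : GeneralLinearGroup ι K} {μ : κ → K}
    (hA : ∀ k, (A : Matrix ι ι K) *ᵥ b k = μ k • b k) (p : ℤ) (u : ι → K) (k : κ) :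
    b.repr ((↑(A ^ p) : Matrix ι ι K) *ᵥ u) k = μ k ^ p * b.repr u k := by
  have hstep : ∀ u, b.repr ((A : Matrix ι ι K) *ᵥ u) k = μ k * b.repr u k := by
    have hcoord : (b.coord k).comp (mulVecLin (A : Matrix ι ι K)) = μ k • b.coord k :=
      b.ext fun j => by
        by_cases hjk : j = k
        · subst hjk; simp [hA]
        · simp [hA, Ne.symm hjk]
    exact fun u => LinearMap.congr_fun hcoord u
  have hμ : μ k ≠ 0 := by
    intro h0
    apply b.ne_zero k
    rw [← one_mulVec (b k), ← Units.val_one, ← inv_mul_cancel A, Units.val_mul,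
      ← mulVec_mulVec, hA, h0, zero_smul, mulVec_zero]
  have hstep_inv : ∀ u, b.repr ((↑A⁻¹ : Matrix ι ι K) *ᵥ u) k = (μ k)⁻¹ * b.repr u k := by
    intro u
    rw [eq_inv_mul_iff_mul_eq₀ hμ, ← hstep, mulVec_mulVec, ← Units.val_mul,
      mul_inv_cancel, Units.val_one, one_mulVec]
  induction p using Int.induction_on generalizing u with
  | zero => simp
  | succ m ih =>
    rw [_root_.zpow_add_one, Units.val_mul, ← mulVec_mulVec, ih, hstep,
      zpow_add_one₀ hμ]
    ring
  | pred m ih =>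
    rw [_root_.zpow_sub_one, Units.val_mul, ← mulVec_mulVec, ih, hstep_inv,
      zpow_sub_one₀ hμ]
    ring

theorem Module.Basis.exists_forall_zpow_mulVec_eq_smul_of_zpow_add
    (b : Module.Basis κ ℝ (ι → ℝ))
    {A : GeneralLinearGroup ι ℝ} {μ : κ → ℝ} (hμ : ∀ k, 0 < μ k)
    (hA : ∀ k, (A : Matrix ι ι ℝ) *ᵥ b k = μ k • b k) {u : ι → ℝ} (hu : u ≠ 0) {p₁ p₂ p₃ : ℤ}
    (h : (↑(A ^ p₁) : Matrix ι ι ℝ) *ᵥ u + (↑(A ^ p₂) : Matrix ι ι ℝ) *ᵥ u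
      = (↑(A ^ p₃) : Matrix ι ι ℝ) *ᵥ u) :
    ∃ k, ∀ p : ℤ, (↑(A ^ p) : Matrix ι ι ℝ) *ᵥ u = μ k ^ p • u := by
  have htri : ∀ k, b.repr u k ≠ 0 → μ k ^ p₁ + μ k ^ p₂ = μ k ^ p₃ := by
    intro k hk
    have hk' := congrArg (fun v => b.repr v k) h
    simp only [map_add, Finsupp.add_apply, b.repr_zpow_mulVec hA] at hk'
    exact mul_right_cancel₀ hk (by rw [add_mul, hk'])
  obtain ⟨k₀, hk₀⟩ : ∃ k, b.repr u k ≠ 0 := by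
    by_contra! h0
    exact hu (b.repr.map_eq_zero_iff.mp (Finsupp.ext h0))
  refine ⟨k₀, fun p => b.repr.injective (Finsupp.ext fun k => ?_)⟩
  rw [b.repr_zpow_mulVec hA, map_smul, Finsupp.smul_apply, smul_eq_mul]
  by_cases hk : b.repr u k = 0
  · simp [hk]
  · rw [eq_of_zpow_add_zpow_eq_zpow (hμ k) (hμ k₀) (htri k hk) (htri k₀ hk₀)]

theorem Matrix.GeneralLinearGroup.zpow_mulVec_add_zpow_mulVec_ne (M : GeneralLinearGroup ι ℤ)
    (b : Module.Basis κ ℝ (ι → ℝ)) {μ : κ → ℝ} (hμ : ∀ k, 0 < μ k ∧ μ k ≠ 1)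
    (hM : ∀ k, (M : Matrix ι ι ℤ).map (fun x : ℤ => (x : ℝ)) *ᵥ b k = μ k • b k)
    {w : ι → ℤ} (hw : w ≠ 0) (p₁ p₂ p₃ : ℤ) :
    (↑(M ^ p₁) : Matrix ι ι ℤ) *ᵥ w + (↑(M ^ p₂) : Matrix ι ι ℤ) *ᵥ w
      ≠ (↑(M ^ p₃) : Matrix ι ι ℤ) *ᵥ w := by
  intro h
  set A := GeneralLinearGroup.map (Int.castRingHom ℝ) M
  set u : ι → ℝ := fun i => (w i : ℝ)
  have hcast : ∀ p : ℤ, (fun i => (((↑(M ^ p) : Matrix ι ι ℤ) *ᵥ w) i : ℝ))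
      = (↑(A ^ p) : Matrix ι ι ℝ) *ᵥ u := by
    intro p
    rw [← map_zpow]
    exact funext fun i => RingHom.map_mulVec (Int.castRingHom ℝ) _ w i
  obtain ⟨i, hi⟩ : ∃ i, w i ≠ 0 := Function.ne_iff.mp hw
  have hreal : (↑(A ^ p₁) : Matrix ι ι ℝ) *ᵥ u + (↑(A ^ p₂) : Matrix ι ι ℝ) *ᵥ u
      = (↑(A ^ p₃) : Matrix ι ι ℝ) *ᵥ u := by
    rw [← hcast p₁, ← hcast p₂, ← hcast p₃, ← h]
    ext
    simp
  obtain ⟨k, hk⟩ := b.exists_forall_zpow_mulVec_eq_smul_of_zpow_add (fun k => (hμ k).1) hM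
    (fun h0 => hi (by simpa [u] using congrFun h0 i)) hreal
  obtain ⟨p, hp⟩ := exists_abs_zpow_mul_lt_one (hμ k).1 (hμ k).2 (w i)
  have hpi := congrFun ((hcast p).trans (hk p)) i
  simp only [Pi.smul_apply, smul_eq_mul, u] at hpi
  rw [← hpi] at hp
  have hzero : ((↑(M ^ p) : Matrix ι ι ℤ) *ᵥ w) i = 0 := by
    exact_mod_cast Int.abs_lt_one_iff.mp (by exact_mod_cast hp)
  rw [hzero, Int.cast_zero, eq_comm, mul_eq_zero] at hpi
  exact hpi.elim (zpow_ne_zero p (hμ k).1.ne') (by exact_mod_cast hi)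

end Eigenbasis

namespace SemidirectProduct

variable {N G : Type*} [Group N] [Group G] {φ : G →* MulAut N}

theorem mem_range_inr_iff {x : N ⋊[φ] G} : x ∈ (inr : G →* N ⋊[φ] G).range ↔ x.left = 1 :=
  ⟨by rintro ⟨g, rfl⟩; rfl, fun h => ⟨x.right, by ext <;> simp [h]⟩⟩

theorem left_eq_of_mem_smul_range_inr {g x : N ⋊[φ] G}
    (hx : x ∈ g • ((inr : G →* N ⋊[φ] G).range : Set (N ⋊[φ] G))) : x.left = g.left := by
  obtain ⟨_, ⟨a, rfl⟩, rfl⟩ := hx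
  simp [mul_left]

theorem left_eq_left_mul_inv_mul (x y : N ⋊[φ] G) : y.left = x.left * φ x.right (x⁻¹ * y).left := by
  rw [← mul_left, mul_inv_cancel_left]

theorem inv_mul_left_ne_one_of_smul_ne {g h x y : N ⋊[φ] G}
    (hx : x ∈ g • ((inr : G →* N ⋊[φ] G).range : Set (N ⋊[φ] G)))
    (hy : y ∈ h • ((inr : G →* N ⋊[φ] G).range : Set (N ⋊[φ] G)))
    (hgh : g • ((inr : G →* N ⋊[φ] G).range : Set (N ⋊[φ] G))
      ≠ h • ((inr : G →* N ⋊[φ] G).range : Set (N ⋊[φ] G))) :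
    (x⁻¹ * y).left ≠ 1 := by
  rw [Ne, ← mem_range_inr_iff]
  intro hxy
  rw [mem_leftCoset_iff] at hx hy
  exact hgh (((leftCoset_eq_iff _).mpr hx).trans
    (((leftCoset_eq_iff _).mpr hxy).trans ((leftCoset_eq_iff _).mpr hy).symm))

end SemidirectProduct

section SDP

open Matrix SemidirectProduct

variable {n : ℕ}

def matAutHom : GeneralLinearGroup (Fin n) ℤ →* MulAut (Multiplicative (Fin n → ℤ)) where
  toFun := matAut
  map_one' := MulEquiv.ext fun a => one_mulVec a.toAdd
  map_mul' A B := MulEquiv.ext fun a =>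
    (mulVec_mulVec a.toAdd (A : Matrix (Fin n) (Fin n) ℤ) B).symm

theorem toAdd_matAction (M : GeneralLinearGroup (Fin n) ℤ) (ρ : Multiplicative ℤ)
    (a : Multiplicative (Fin n → ℤ)) :
    (matAction M ρ a).toAdd = (↑(M ^ ρ.toAdd) : Matrix (Fin n) (Fin n) ℤ) *ᵥ a.toAdd := by
  rw [show matAction M ρ = matAutHom M ^ ρ.toAdd from rfl, ← map_zpow]
  rfl

theorem zpowers_tGen (M : GeneralLinearGroup (Fin n) ℤ) :
    Subgroup.zpowers (tGen M) = (inr : Multiplicative ℤ →* SDP M).range := by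
  ext g
  rw [Subgroup.mem_zpowers_iff, MonoidHom.mem_range]
  constructor
  · rintro ⟨k, rfl⟩
    exact ⟨_, map_zpow inr (Multiplicative.ofAdd (1 : ℤ)) k⟩
  · rintro ⟨a, rfl⟩
    refine ⟨a.toAdd, ?_⟩
    rw [tGen, ← map_zpow, ← ofAdd_zsmul, smul_eq_mul, mul_one, ofAdd_toAdd]

variable {M : GeneralLinearGroup (Fin n) ℤ} {g h x y : SDP M}

theorem toAdd_left_sub_eq_zpow_mulVec
    (hx : x ∈ g • (Subgroup.zpowers (tGen M) : Set (SDP M)))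
    (hy : y ∈ h • (Subgroup.zpowers (tGen M) : Set (SDP M))) :
    ∀ x' ∈ g • (Subgroup.zpowers (tGen M) : Set (SDP M)),
    ∀ y' ∈ h • (Subgroup.zpowers (tGen M) : Set (SDP M)),
      y'.left.toAdd - x'.left.toAdd
        = (↑(M ^ x.right.toAdd) : Matrix (Fin n) (Fin n) ℤ) *ᵥ (x⁻¹ * y).left.toAdd := by
  simp only [zpowers_tGen] at hx hy ⊢
  intro x' hx' y' hy'
  rw [left_eq_of_mem_smul_range_inr hx', left_eq_of_mem_smul_range_inr hy',
    ← left_eq_of_mem_smul_range_inr hx, ← left_eq_of_mem_smul_range_inr hy,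
    left_eq_left_mul_inv_mul x y, toAdd_mul, toAdd_matAction, add_sub_cancel_left]

theorem toAdd_left_inv_mul_ne_zero
    (hx : x ∈ g • (Subgroup.zpowers (tGen M) : Set (SDP M)))
    (hy : y ∈ h • (Subgroup.zpowers (tGen M) : Set (SDP M)))
    (hgh : g • (Subgroup.zpowers (tGen M) : Set (SDP M))
      ≠ h • (Subgroup.zpowers (tGen M) : Set (SDP M))) :
    (x⁻¹ * y).left.toAdd ≠ 0 := by
  simp only [zpowers_tGen] at hx hy hgh
  exact toAdd_eq_zero.not.mpr (inv_mul_left_ne_one_of_smul_ne hx hy hgh)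

end SDP

open Finset Matrix in
/-- If `φ ∈ GL_n(ℤ)` is hyperbolic and diagonalizable over `ℝ` with positive
eigenvalues, then the cyclic subgroup `⟨t⟩` has bounded packing in
`G = ℤⁿ ⋊_φ ℤ` with its word metric. -/
theorem bounded_packing_of_t {n : ℕ}
    (M : Matrix.GeneralLinearGroup (Fin n) ℤ)
    (hdiag : ∃ (v : Fin n → Fin n → ℝ) (μ : Fin n → ℝ),
      LinearIndependent ℝ v ∧ (∀ i, 0 < μ i ∧ μ i ≠ 1) ∧
      ∀ i, ((M : Matrix (Fin n) (Fin n) ℤ).map (fun x : ℤ => (x : ℝ))).mulVec (v i)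
        = μ i • v i)
    (d : SDP M → SDP M → ℝ) (hd : IsWordMetric d) :
    BoundedPacking d (Subgroup.zpowers (tGen M)) := by
  classical
  obtain ⟨v, μ, hv, hμ, hMv⟩ := hdiag
  set b := basisOfPiSpaceOfLinearIndependent hv
  have hMb : ∀ i, (M : Matrix (Fin n) (Fin n) ℤ).map (fun x : ℤ => (x : ℝ)) *ᵥ b i = μ i • b i :=
    by simpa [b, coe_basisOfPiSpaceOfLinearIndependent] using hMv
  intro r _
  obtain ⟨B, hB⟩ := hd.exists_finset_inv_mul_mem r
  set W := B.image fun g => g.left.toAdd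
  obtain ⟨N, hN⟩ := exists_monochromatic_triangle (α := Set (SDP M)) #W
  refine ⟨N, fun C hC hCN => ?_⟩
  by_contra! hclose
  have hcolour : ∀ X ∈ C, ∀ Y ∈ C, X ≠ Y → ∃ w ∈ W, w ≠ 0 ∧ ∃ p : ℤ,
      ∀ x ∈ X, ∀ y ∈ Y, y.left.toAdd - x.left.toAdd = (↑(M ^ p) : Matrix _ _ ℤ) *ᵥ w := by
    intro X hX Y hY hXY
    obtain ⟨x, hx, y, hy, hxy⟩ := hclose X hX Y hY hXY
    obtain ⟨g, rfl⟩ := hC X hX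
    obtain ⟨h, rfl⟩ := hC Y hY
    exact ⟨_, mem_image_of_mem _ (hB x y hxy), toAdd_left_inv_mul_ne_zero hx hy hXY, _,
      toAdd_left_sub_eq_zpow_mulVec hx hy⟩
  choose! c hcW hc0 p hp using hcolour
  have hne : ∀ X ∈ C, X.Nonempty := fun X hX => by
    obtain ⟨g, rfl⟩ := hC X hX
    exact ⟨g, mem_own_leftCoset _ g⟩
  obtain ⟨X, hX, Y, hY, Z, hZ, hXY, hYZ, hXZ, hc₁, hc₂⟩ := hN C W c le_rfl hCN hcW
  obtain ⟨x, hx⟩ := hne X hX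
  obtain ⟨y, hy⟩ := hne Y hY
  obtain ⟨z, hz⟩ := hne Z hZ
  have hxy := hp X hX Y hY hXY x hx y hy
  have hyz := hp Y hY Z hZ hYZ y hy z hz
  have hxz := hp X hX Z hZ hXZ x hx z hz
  rw [← hc₁] at hyz
  rw [← hc₂] at hxz
  refine GeneralLinearGroup.zpow_mulVec_add_zpow_mulVec_ne M b hμ hMb (hc0 X hX Y hY hXY)
    (p X Y) (p Y Z) (p X Z) ?_
  rw [← hxy, ← hyz, ← hxz]
  abel
end

section
/- In the Lie group Sol = ℝ² ⋊ ℝ with left-invariant Riemannian metric ds² = e^{2z}dx² + e^{−2z}dy² + dz², the distance between two points (x₁,y₁,0) and (x₂,y₂,0) in the plane z = 0 satisfies d_S((x₁,y₁,0),(x₂,y₂,0)) ≥ max{2·log|x₂−x₁|, 2·log|y₂−y₁|}. -/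
/-!
Projecting away `y`, the `(x, z)`-plane with metric `e^{2z}dx² + dz²` is the hyperbolic plane
(upper half-plane with height `e^{-z}`), and `solBusemann ξ`, which is
`log (((x - ξ)² + e^{-2z}) / e^{-z})`, is its Busemann function at the boundary point `ξ`.
Busemann functions are 1-Lipschitz, so along the path `solBusemann (x 0)` grows by at most the
length; it grows from `0` to `log ((x 1 - x 0) ^ 2 + 1) ≥ 2 log |x 1 - x 0|`. The isometry
`(x, y, z) ↦ (y, x, -z)` gives the bound in `y`.
-/

open Real MeasureTheory

noncomputable section

def solSpeed (x y z : ℝ → ℝ) (t : ℝ) : ℝ :=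
  √(exp (2 * z t) * deriv x t ^ 2 + exp (-(2 * z t)) * deriv y t ^ 2 + deriv z t ^ 2)

def solBusemann (ξ x z : ℝ) : ℝ :=
  log ((x - ξ) ^ 2 + exp (-(2 * z))) + z

end

lemma solSpeed_swap_neg (x y z : ℝ → ℝ) : solSpeed y x (-z) = solSpeed x y z := by
  ext t
  simp only [solSpeed, deriv.neg, Pi.neg_apply, neg_sq, mul_neg, neg_neg]
  ring_nf

lemma continuous_solSpeed {x y z : ℝ → ℝ}
    (hx : ContDiff ℝ 1 x) (hy : ContDiff ℝ 1 y) (hz : ContDiff ℝ 1 z) :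
    Continuous (solSpeed x y z) := by
  have hx' := hx.continuous_deriv le_rfl
  have hy' := hy.continuous_deriv le_rfl
  have hz' := hz.continuous_deriv le_rfl
  have hz := hz.continuous
  unfold solSpeed
  fun_prop

lemma mul_add_mul_le_sqrt_mul_sqrt (p q r s : ℝ) :
    p * r + q * s ≤ √(p ^ 2 + q ^ 2) * √(r ^ 2 + s ^ 2) := by
  simpa [Fin.sum_univ_two] using Real.sum_mul_le_sqrt_mul_sqrt Finset.univ ![p, q] ![r, s]

lemma hasDerivAt_solBusemann (ξ : ℝ) {u w : ℝ → ℝ} {u' w' t : ℝ}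
    (hu : HasDerivAt u u' t) (hw : HasDerivAt w w' t) :
    HasDerivAt (fun s ↦ solBusemann ξ (u s) (w s))
      ((2 * (u t - ξ) * u' + w' * ((u t - ξ) ^ 2 - exp (-(2 * w t)))) /
        ((u t - ξ) ^ 2 + exp (-(2 * w t)))) t := by
  have hpos : 0 < (u t - ξ) ^ 2 + exp (-(2 * w t)) := by positivity
  have hsq : HasDerivAt (fun s ↦ (u s - ξ) ^ 2) (2 * (u t - ξ) * u') t := by
    simpa using (hu.sub_const ξ).fun_pow 2
  have hexp : HasDerivAt (fun s ↦ exp (-(2 * w s))) (exp (-(2 * w t)) * -(2 * w')) t :=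
    ((hw.const_mul 2).neg).exp
  refine (((hsq.add hexp).log hpos.ne').add hw).congr_deriv ?_
  simp only [Pi.add_apply]
  field_simp
  ring

lemma solBusemann_deriv_le (X a c z : ℝ) :
    (2 * X * a + c * (X ^ 2 - exp (-(2 * z)))) / (X ^ 2 + exp (-(2 * z))) ≤
      √(exp (2 * z) * a ^ 2 + c ^ 2) := by
  have hpos : 0 < X ^ 2 + exp (-(2 * z)) := by positivity
  have hnorm : (2 * X * exp (-z)) ^ 2 + (X ^ 2 - exp (-(2 * z))) ^ 2 =
      (X ^ 2 + exp (-(2 * z))) ^ 2 := by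
    rw [mul_pow, ← exp_nat_mul]; push_cast; ring_nf
  have hspeed : (exp z * a) ^ 2 = exp (2 * z) * a ^ 2 := by
    rw [mul_pow, ← exp_nat_mul]; push_cast; ring_nf
  rw [div_le_iff₀ hpos]
  calc 2 * X * a + c * (X ^ 2 - exp (-(2 * z)))
      = 2 * X * exp (-z) * (exp z * a) + (X ^ 2 - exp (-(2 * z))) * c := by
        have hinv : exp (-z) * exp z = 1 := by rw [← exp_add, neg_add_cancel, exp_zero]
        linear_combination (-(2 * X * a)) * hinv
    _ ≤ √((2 * X * exp (-z)) ^ 2 + (X ^ 2 - exp (-(2 * z))) ^ 2) * √((exp z * a) ^ 2 + c ^ 2) :=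
        mul_add_mul_le_sqrt_mul_sqrt _ _ _ _
    _ = √(exp (2 * z) * a ^ 2 + c ^ 2) * (X ^ 2 + exp (-(2 * z))) := by
        rw [hnorm, hspeed, sqrt_sq hpos.le, mul_comm]

lemma solBusemann_sub_le_integral_solSpeed (ξ : ℝ) {x y z : ℝ → ℝ} {a b : ℝ} (hab : a ≤ b)
    (hx : Differentiable ℝ x) (hz : Differentiable ℝ z)
    (hint : IntegrableOn (solSpeed x y z) (Set.Icc a b)) :
    solBusemann ξ (x b) (z b) - solBusemann ξ (x a) (z a) ≤ ∫ t in a..b, solSpeed x y z t := by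
  have hderiv t := hasDerivAt_solBusemann ξ (hx t).hasDerivAt (hz t).hasDerivAt
  refine intervalIntegral.sub_le_integral_of_hasDeriv_right_of_le hab
    (fun t _ ↦ (hderiv t).continuousAt.continuousWithinAt)
    (fun t _ ↦ (hderiv t).hasDerivWithinAt) hint fun t _ ↦ ?_
  calc _ ≤ √(exp (2 * z t) * deriv x t ^ 2 + deriv z t ^ 2) := solBusemann_deriv_le _ _ _ _
    _ ≤ solSpeed x y z t := by
      have : 0 ≤ exp (-(2 * z t)) * deriv y t ^ 2 := by positivity
      exact sqrt_le_sqrt (by linarith)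

lemma two_mul_log_abs_le_log_sq_add_one (d : ℝ) : 2 * log |d| ≤ log (d ^ 2 + 1) := by
  rcases eq_or_ne d 0 with rfl | hd
  · simp
  calc 2 * log |d| = log (d ^ 2) := by rw [← sq_abs, log_pow, Nat.cast_ofNat]
    _ ≤ _ := log_le_log (by positivity) (by linarith)

lemma two_mul_log_abs_sub_le_integral_solSpeed {x y z : ℝ → ℝ}
    (hx : ContDiff ℝ 1 x) (hy : ContDiff ℝ 1 y) (hz : ContDiff ℝ 1 z)
    (hz0 : z 0 = 0) (hz1 : z 1 = 0) :
    2 * log |x 1 - x 0| ≤ ∫ t in (0 : ℝ)..1, solSpeed x y z t :=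
  calc 2 * log |x 1 - x 0| ≤ log ((x 1 - x 0) ^ 2 + 1) := two_mul_log_abs_le_log_sq_add_one _
    _ = solBusemann (x 0) (x 1) (z 1) - solBusemann (x 0) (x 0) (z 0) := by
      simp [solBusemann, hz0, hz1]
    _ ≤ _ := solBusemann_sub_le_integral_solSpeed _ zero_le_one (hx.differentiable one_ne_zero)
      (hz.differentiable one_ne_zero) (continuous_solSpeed hx hy hz).integrableOn_Icc

/-- In `Sol` with the left-invariant metric `ds² = e^{2z}dx² + e^{-2z}dy² + dz²`,
the length of any smooth path between two points of the plane `z = 0` is at least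
`max (2 log|x₂ - x₁|) (2 log|y₂ - y₁|)`; hence so is the Sol distance. -/
theorem sol_distance_lower_bound (x y z : ℝ → ℝ)
    (hx : ContDiff ℝ 1 x) (hy : ContDiff ℝ 1 y) (hz : ContDiff ℝ 1 z)
    (hz0 : z 0 = 0) (hz1 : z 1 = 0) :
    max (2 * Real.log |x 1 - x 0|) (2 * Real.log |y 1 - y 0|) ≤
      ∫ t in (0 : ℝ)..1, Real.sqrt (Real.exp (2 * z t) * (deriv x t) ^ 2 +
        Real.exp (-(2 * z t)) * (deriv y t) ^ 2 + (deriv z t) ^ 2) := by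
  refine max_le (two_mul_log_abs_sub_le_integral_solSpeed hx hy hz hz0 hz1) ?_
  have hy_bound := two_mul_log_abs_sub_le_integral_solSpeed (z := -z) hy hx hz.neg
    (by simp [hz0]) (by simp [hz1])
  rwa [solSpeed_swap_neg] at hy_bound
end
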